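/- With notation as in the skew-product isomorphism φ : G_Λ(c̃) → G_{Λ ×_c A}, the image of (∂Λ) × A under the induced map on unit spaces equals the boundary-path space ∂(Λ ×_c A); consequently 𝒢_Λ(c̃) ≅ 𝒢_{Λ ×_c A}. -/

import Mathlib

open Set

namespace TKG

/-- A topological `k`-graph: a small category with objects `Obj` and morphisms `Mor`,
a degree functor `d : Mor → ℕ^k` satisfying the unique factorization property, with
second-countable locally compact Hausdorff topologies making the structure maps suitably
continuous, the source map a local homeomorphism and composition continuous and open. -/
structure TopKGraph (k : ℕ) (Obj Mor : Type)
    [TopologicalSpace Obj] [TopologicalSpace Mor] where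
  r : Mor → Obj
  s : Mor → Obj
  ident : Obj → Mor
  comp : ∀ f g : Mor, s f = r g → Mor
  d : Mor → Fin k → ℕ
  r_ident : ∀ v, r (ident v) = v
  s_ident : ∀ v, s (ident v) = v
  d_ident : ∀ v, d (ident v) = 0
  r_comp : ∀ f g h, r (comp f g h) = r f
  s_comp : ∀ f g h, s (comp f g h) = s g
  d_comp : ∀ f g h, d (comp f g h) = d f + d g
  ident_comp : ∀ (f : Mor) (h : s (ident (r f)) = r f), comp (ident (r f)) f h = f
  comp_ident : ∀ (f : Mor) (h : s f = r (ident (s f))), comp f (ident (s f)) h = f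
  comp_assoc : ∀ (f g h : Mor) (hfg : s f = r g) (hgh : s g = r h)
    (h1 : s (comp f g hfg) = r h) (h2 : s f = r (comp g h hgh)),
    comp (comp f g hfg) h h1 = comp f (comp g h hgh) h2
  factor : ∀ (f : Mor) (m n : Fin k → ℕ), d f = m + n →
    ∃! gh : Mor × Mor, ∃ h : s gh.1 = r gh.2,
      comp gh.1 gh.2 h = f ∧ d gh.1 = m ∧ d gh.2 = n
  secondCountableObj : SecondCountableTopology Obj
  secondCountableMor : SecondCountableTopology Mor
  locallyCompactObj : LocallyCompactSpace Obj
  locallyCompactMor : LocallyCompactSpace Mor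
  t2Obj : T2Space Obj
  t2Mor : T2Space Mor
  continuous_r : Continuous r
  continuous_s : Continuous s
  isLocalHomeomorph_s : IsLocalHomeomorph s
  continuous_comp : Continuous fun p : {p : Mor × Mor // s p.1 = r p.2} => comp p.1.1 p.1.2 p.2
  isOpenMap_comp : IsOpenMap fun p : {p : Mor × Mor // s p.1 = r p.2} => comp p.1.1 p.1.2 p.2
  continuous_d : Continuous d

variable {k : ℕ} {Obj Mor : Type} [TopologicalSpace Obj] [TopologicalSpace Mor]

/-- `Λ^{min}(λ,μ)`: the pairs `(α,β)` with `λα = μβ` and `d(λα) = d(λ) ⊔ d(μ)`. -/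
def MinExt (Λ : TopKGraph k Obj Mor) (l m : Mor) : Set (Mor × Mor) :=
  {ab | ∃ (h1 : Λ.s l = Λ.r ab.1) (h2 : Λ.s m = Λ.r ab.2),
      Λ.comp l ab.1 h1 = Λ.comp m ab.2 h2 ∧ Λ.d l + Λ.d ab.1 = Λ.d l ⊔ Λ.d m}

/-- `E ∨ F`: the set of minimal common extensions of paths from `E` and from `F`. -/
def MCE (Λ : TopKGraph k Obj Mor) (E F : Set Mor) : Set Mor :=
  {f | ∃ l ∈ E, ∃ m ∈ F, Λ.d f = Λ.d l ⊔ Λ.d m ∧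
        (∃ (a : Mor) (h : Λ.s l = Λ.r a), Λ.comp l a h = f) ∧
        (∃ (b : Mor) (h : Λ.s m = Λ.r b), Λ.comp m b h = f)}

/-- `Λ` is compactly aligned: `U ∨ V` is compact for all compact `U ⊆ Λ^p`, `V ⊆ Λ^q`. -/
def CompactlyAligned (Λ : TopKGraph k Obj Mor) : Prop :=
  ∀ (p q : Fin k → ℕ) (U V : Set Mor), U ⊆ {f | Λ.d f = p} → V ⊆ {f | Λ.d f = q} →
    IsCompact U → IsCompact V → IsCompact (MCE Λ U V)

/-- `Λ` is finitely aligned: `Λ^{min}(λ,μ)` is finite for all `λ, μ`. -/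
def FinitelyAligned (Λ : TopKGraph k Obj Mor) : Prop :=
  ∀ l m : Mor, (MinExt Λ l m).Finite

/-- An element of the path space `X_Λ`: a degree-preserving functor from `Ω_{k,m}` to `Λ`,
recorded by its degree `m ∈ (ℕ ∪ {∞})^k` and its segments `x(p,q)` for `p ≤ q ≤ m`
(with a fixed junk value outside the domain, so that paths are determined by their
segments on their domain). -/
structure KPath (Λ : TopKGraph k Obj Mor) where
  deg : Fin k → ℕ∞
  seg : (Fin k → ℕ) → (Fin k → ℕ) → Mor
  seg_junk : ∀ p q, ¬(p ≤ q ∧ ∀ i, (q i : ℕ∞) ≤ deg i) → seg p q = seg 0 0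
  d_seg : ∀ p q, p ≤ q → (∀ i, (q i : ℕ∞) ≤ deg i) → Λ.d (seg p q) = q - p
  seg_comp : ∀ p q u, p ≤ q → q ≤ u → (∀ i, (u i : ℕ∞) ≤ deg i) →
    ∃ h : Λ.s (seg p q) = Λ.r (seg q u), Λ.comp (seg p q) (seg q u) h = seg p u
  seg_ident : ∀ p, (∀ i, (p i : ℕ∞) ≤ deg i) → seg p p = Λ.ident (Λ.r (seg p p))

variable {Λ : TopKGraph k Obj Mor}

/-- `q` is in the domain of the path `x`, i.e. `q ≤ d(x)`. -/
def KPath.dom (x : KPath Λ) (q : Fin k → ℕ) : Prop := ∀ i, (q i : ℕ∞) ≤ x.deg i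

/-- The range vertex `r(x) = x(0)` of a path. -/
def KPath.rng (x : KPath Λ) : Obj := Λ.r (x.seg 0 0)

/-- The vertex `x(m)` of a path. -/
def KPath.vtx (x : KPath Λ) (m : Fin k → ℕ) : Obj := Λ.r (x.seg m m)

/-- `y = σ^m x`, the shift of `x` by `m ≤ d(x)`. -/
def IsShiftOf (m : Fin k → ℕ) (x y : KPath Λ) : Prop :=
  (∀ i, (m i : ℕ∞) ≤ x.deg i) ∧ (∀ i, y.deg i = x.deg i - (m i : ℕ∞)) ∧
  ∀ p q, p ≤ q → (∀ i, (q i : ℕ∞) ≤ y.deg i) → y.seg p q = x.seg (m + p) (m + q)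

/-- `y = λ x`, the concatenation of the morphism `λ` with the path `x` (so `s(λ) = r(x)`),
characterized by `d(y) = d(λ) + d(x)`, `y(0,p)` an initial segment of `λ` for `p ≤ d(λ)`,
and `y(0,p) = λ ⬝ x(0, p - d(λ))` for `d(λ) ≤ p ≤ d(y)`. -/
def IsConcatOf (l : Mor) (x y : KPath Λ) : Prop :=
  Λ.s l = x.rng ∧ (∀ i, y.deg i = (Λ.d l i : ℕ∞) + x.deg i) ∧
  (∀ p, p ≤ Λ.d l →
    ∃ (a : Mor) (h : Λ.s (y.seg 0 p) = Λ.r a),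
      Λ.d (y.seg 0 p) = p ∧ Λ.comp (y.seg 0 p) a h = l) ∧
  (∀ p, Λ.d l ≤ p → (∀ i, (p i : ℕ∞) ≤ y.deg i) →
    ∃ h : Λ.s l = Λ.r (x.seg 0 (p - Λ.d l)),
      y.seg 0 p = Λ.comp l (x.seg 0 (p - Λ.d l)) h)

/-- `E` is exhaustive for a set `V` of vertices. -/
def Exhaustive (Λ : TopKGraph k Obj Mor) (V : Set Obj) (E : Set Mor) : Prop :=
  ∀ l : Mor, Λ.r l ∈ V → ∃ m ∈ E, (MinExt Λ l m).Nonempty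

/-- `v CE(Λ)`: compact sets `E` with `r(E)` a neighbourhood of `v` and `E` exhaustive
for `r(E)`. -/
def CE (Λ : TopKGraph k Obj Mor) (v : Obj) : Set (Set Mor) :=
  {E | IsCompact E ∧ Λ.r '' E ∈ nhds v ∧ Exhaustive Λ (Λ.r '' E) E}

/-- `x` is a boundary path: for every `m ≤ d(x)` and every `E ∈ x(m)CE(Λ)` there is
`λ ∈ E` with `x(m, m + d(λ)) = λ`. -/
def IsBoundary (x : KPath Λ) : Prop :=
  ∀ m : Fin k → ℕ, x.dom m → ∀ E ∈ CE Λ (x.vtx m),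
    ∃ l ∈ E, x.dom (m + Λ.d l) ∧ x.seg m (m + Λ.d l) = l

/-- `Z(W)`: the set of paths with an initial segment in `W`. -/
def ZSet (Λ : TopKGraph k Obj Mor) (W : Set Mor) : Set (KPath Λ) :=
  {x | ∃ l ∈ W, x.dom (Λ.d l) ∧ x.seg 0 (Λ.d l) = l}

/-- The topology on the path space `X_Λ`, generated by the sets `Z(U) ∩ Z(F)ᶜ` for
`U ⊆ Λ` open and `F ⊆ Λ` compact. -/
def pathTopology (Λ : TopKGraph k Obj Mor) : TopologicalSpace (KPath Λ) :=
  TopologicalSpace.generateFrom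
    {S | ∃ U F : Set Mor, IsOpen U ∧ IsCompact F ∧ S = ZSet Λ U ∩ (ZSet Λ F)ᶜ}

/-- The ambient space of triples for the path groupoid. -/
abbrev GTriple (Λ : TopKGraph k Obj Mor) : Type :=
  KPath Λ × (Fin k → ℤ) × KPath Λ

/-- The path groupoid `G_Λ` as a set of triples `(x, m, y)` such that `σ^p x = σ^q y`
for some `p ≤ d(x)`, `q ≤ d(y)` with `p - q = m`. -/
def PathGroupoidCarrier (Λ : TopKGraph k Obj Mor) : Set (GTriple Λ) :=
  {t | ∃ p q : Fin k → ℕ, t.2.1 = (fun i => (p i : ℤ) - (q i : ℤ)) ∧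
        ∃ z : KPath Λ, IsShiftOf p t.1 z ∧ IsShiftOf q t.2.2 z}

/-- `Z(F, m) = {(λx, d(λ)-d(μ), μx) : (λ,μ) ∈ F, d(λ)-d(μ) = m}`. -/
def ZG (Λ : TopKGraph k Obj Mor) (F : Set (Mor × Mor)) (m : Fin k → ℤ) :
    Set (GTriple Λ) :=
  {t | t.2.1 = m ∧ ∃ lm ∈ F, Λ.s lm.1 = Λ.s lm.2 ∧
        (fun i => (Λ.d lm.1 i : ℤ) - (Λ.d lm.2 i : ℤ)) = m ∧
        ∃ x : KPath Λ, IsConcatOf lm.1 x t.1 ∧ IsConcatOf lm.2 x t.2.2}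

/-- The topology on the path groupoid `G_Λ`, generated by the sets
`Z(U *ₛ V, m) ∩ Z(F, m)ᶜ` with `U, V` open and `F ⊆ Λ *ₛ Λ` compact. -/
def groupoidTopology (Λ : TopKGraph k Obj Mor) : TopologicalSpace (GTriple Λ) :=
  TopologicalSpace.generateFrom
    {S | ∃ (m : Fin k → ℤ) (U V : Set Mor) (F : Set (Mor × Mor)),
      IsOpen U ∧ IsOpen V ∧ IsCompact F ∧
      S = ZG Λ ((U ×ˢ V) ∩ {lm | Λ.s lm.1 = Λ.s lm.2}) m ∩ (ZG Λ F m)ᶜ}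

/-- A boundary path `x` is aperiodic if `σ^p x ≠ σ^q x` whenever `p ≠ q`,
`p, q ≤ d(x)`. -/
def Aperiodic (x : KPath Λ) : Prop :=
  ∀ p q : Fin k → ℕ, x.dom p → x.dom q → p ≠ q →
    ¬∃ z : KPath Λ, IsShiftOf p x z ∧ IsShiftOf q x z

/-- `Λ` is proper: `U Λ^m` is compact for every compact `U ⊆ Λ^0` and `m ∈ ℕ^k`. -/
def ProperGraph (Λ : TopKGraph k Obj Mor) : Prop :=
  ∀ (m : Fin k → ℕ) (U : Set Obj), IsCompact U →
    IsCompact {f : Mor | Λ.d f = m ∧ Λ.r f ∈ U}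

/-- `Λ` has no sources: every vertex receives an edge of each degree `e_i`. -/
def NoSources (Λ : TopKGraph k Obj Mor) : Prop :=
  ∀ (v : Obj) (i : Fin k), ∃ f : Mor, Λ.d f = Pi.single i 1 ∧ Λ.r f = v

/-- The set `Ext(E; F)` of minimal extenders of `E` by `F`. -/
def ExtSet (Λ : TopKGraph k Obj Mor) (E F : Set Mor) : Set Mor :=
  {a | ∃ l ∈ E, ∃ m ∈ F, ∃ b : Mor, (a, b) ∈ MinExt Λ l m}

end TKG

namespace TKG

variable {k : ℕ} {Obj Mor : Type} [TopologicalSpace Obj] [TopologicalSpace Mor]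

/-- The path groupoid `G_Λ` as a topological space (subspace of the triple space). -/
def PathGpd (Λ : TopKGraph k Obj Mor) : Type :=
  {t : GTriple Λ // t ∈ PathGroupoidCarrier Λ}

instance (Λ : TopKGraph k Obj Mor) : TopologicalSpace (PathGpd Λ) :=
  TopologicalSpace.induced Subtype.val (groupoidTopology Λ)

/-- The boundary-path groupoid `𝒢_Λ = G_Λ|_{∂Λ}` as a topological space. -/
def BdryGpd (Λ : TopKGraph k Obj Mor) : Type :=
  {t : GTriple Λ // t ∈ PathGroupoidCarrier Λ ∧ IsBoundary t.1 ∧ IsBoundary t.2.2}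

instance (Λ : TopKGraph k Obj Mor) : TopologicalSpace (BdryGpd Λ) :=
  TopologicalSpace.induced Subtype.val (groupoidTopology Λ)

/-- `X = φ(x, a)`: the path of the skew-product graph `Λ ×_c A` determined by a path
`x` of `Λ` and `a ∈ A`, via `φ(x,a)(m,n) = (x(m,n), a·c(x(0,m)))`. -/
def IsPhiOf {A : Type} [TopologicalSpace A] [Group A]
    (Λ : TopKGraph k Obj Mor) (SP : TopKGraph k (Obj × A) (Mor × A))
    (c : Mor → A) (x : KPath Λ) (a : A) (X : KPath SP) : Prop :=
  X.deg = x.deg ∧ ∀ p q : Fin k → ℕ, p ≤ q → x.dom q →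
    X.seg p q = (x.seg p q, a * c (x.seg 0 p))

end TKG


namespace TKG

section Aux

variable {k : ℕ} {Obj Mor : Type} [TopologicalSpace Obj] [TopologicalSpace Mor]
variable {Λ : TopKGraph k Obj Mor}

/-! ### Pi-ℕ and ℕ∞ helpers -/

theorem pi_sub_zero (p : Fin k → ℕ) : p - 0 = p := funext fun i => Nat.sub_zero _

theorem pi_add_sub_cancel_left (m p : Fin k → ℕ) : m + p - m = p := by
  funext i
  simp only [Pi.sub_apply, Pi.add_apply]
  omega

theorem pi_sub_sub_self (p q : Fin k → ℕ) (h : p ≤ q) : p + (q - p) = q := by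
  funext i
  have hi : p i ≤ q i := h i
  show p i + (q i - p i) = q i
  omega

theorem enat_add_sub_cancel_left (n : ℕ) (b : ℕ∞) : (n : ℕ∞) + b - n = b := by
  cases b with
  | top => simp
  | coe m =>
    rw [← Nat.cast_add, ← ENat.coe_sub]
    norm_num

/-! ### generic `TopKGraph` lemmas -/

theorem comp_hcongr (Λ : TopKGraph k Obj Mor) {f f' g g' : Mor} (hf : f = f') (hg : g = g')
    (h : Λ.s f = Λ.r g) (h' : Λ.s f' = Λ.r g') : Λ.comp f g h = Λ.comp f' g' h' := by
  subst hf; subst hg; rfl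

theorem eq_ident_of_d_eq_zero (Λ : TopKGraph k Obj Mor) {f : Mor} (hf : Λ.d f = 0) :
    f = Λ.ident (Λ.r f) := by
  obtain ⟨gh, _, huniq⟩ := Λ.factor f 0 0 (by simpa using hf)
  have hA : (Λ.ident (Λ.r f), f) = gh :=
    huniq _ ⟨by rw [Λ.s_ident], Λ.ident_comp f _, Λ.d_ident _, hf⟩
  have hB : (f, Λ.ident (Λ.s f)) = gh :=
    huniq _ ⟨(Λ.r_ident (Λ.s f)).symm, Λ.comp_ident f _, hf, Λ.d_ident _⟩
  have := hA.trans hB.symm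
  exact (congrArg Prod.fst this).symm

theorem comp_cancel_left (Λ : TopKGraph k Obj Mor) {f g g' : Mor}
    (h : Λ.s f = Λ.r g) (h' : Λ.s f = Λ.r g')
    (hdg : Λ.d g = Λ.d g') (hco : Λ.comp f g h = Λ.comp f g' h') : g = g' := by
  obtain ⟨gh, _, huniq⟩ := Λ.factor (Λ.comp f g h) (Λ.d f) (Λ.d g) (Λ.d_comp f g h)
  have hA : (f, g) = gh := huniq _ ⟨h, rfl, rfl, rfl⟩
  have hB : (f, g') = gh := huniq _ ⟨h', hco.symm, rfl, hdg.symm⟩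
  have := hA.trans hB.symm
  exact congrArg Prod.snd this

/-! ### `KPath` basics -/

theorem dom_zero (x : KPath Λ) : x.dom 0 := fun i => by simp

theorem dom_mono {x : KPath Λ} {p q : Fin k → ℕ} (h : p ≤ q) (hq : x.dom q) : x.dom p :=
  fun i => le_trans (by exact_mod_cast h i) (hq i)

theorem dom_sup {x : KPath Λ} {p q : Fin k → ℕ} (hp : x.dom p) (hq : x.dom q) :
    x.dom (p ⊔ q) := by
  intro i
  rcases le_total (p i) (q i) with h | h
  · simpa [Pi.sup_apply, sup_eq_right.2 h] using hq i
  · simpa [Pi.sup_apply, sup_eq_left.2 h] using hp i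

theorem kpath_ext {x y : KPath Λ} (hdeg : x.deg = y.deg)
    (hseg : ∀ p q, p ≤ q → y.dom q → x.seg p q = y.seg p q) : x = y := by
  have h00 : x.seg 0 0 = y.seg 0 0 := hseg 0 0 le_rfl (dom_zero y)
  have hsg : x.seg = y.seg := by
    funext p q
    by_cases h : p ≤ q ∧ y.dom q
    · exact hseg p q h.1 h.2
    · rw [x.seg_junk p q (by rw [hdeg]; exact h), y.seg_junk p q h, h00]
  cases x; cases y
  cases hdeg; cases hsg; rfl


theorem pi_zero_le (p : Fin k → ℕ) : (0 : Fin k → ℕ) ≤ p := fun _ => Nat.zero_le _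

/-- Characterization of `IsConcatOf` via initial segment and shift. -/
theorem isConcatOf_iff {l : Mor} {x y : KPath Λ} :
    IsConcatOf l x y ↔
      y.dom (Λ.d l) ∧ y.seg 0 (Λ.d l) = l ∧ IsShiftOf (Λ.d l) y x := by
  constructor
  · rintro ⟨hsl, hdeg, hinit, htail⟩
    have hdom : y.dom (Λ.d l) := fun i => by rw [hdeg i]; exact le_self_add
    obtain ⟨a, h, hda, hca⟩ := hinit (Λ.d l) le_rfl
    have hda0 : Λ.d a = 0 := by
      have h1 : Λ.d (Λ.comp (y.seg 0 (Λ.d l)) a h) = Λ.d l := by rw [hca]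
      rw [Λ.d_comp, hda] at h1
      funext i
      have h2 := congrFun h1 i
      simp only [Pi.add_apply] at h2
      show Λ.d a i = 0
      omega
    have ha : a = Λ.ident (Λ.r a) := eq_ident_of_d_eq_zero Λ hda0
    have hseg : y.seg 0 (Λ.d l) = l := by
      have ha' : a = Λ.ident (Λ.s (y.seg 0 (Λ.d l))) := by rw [ha, ← h]
      calc y.seg 0 (Λ.d l)
          = Λ.comp (y.seg 0 (Λ.d l)) (Λ.ident (Λ.s (y.seg 0 (Λ.d l))))
              ((Λ.r_ident _).symm) := (Λ.comp_ident _ _).symm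
        _ = Λ.comp (y.seg 0 (Λ.d l)) a h := comp_hcongr Λ rfl ha'.symm _ _
        _ = l := hca
    refine ⟨hdom, hseg, hdom, fun i => by rw [hdeg i, enat_add_sub_cancel_left], ?_⟩
    intro p q hpq hqx
    have hdomq : y.dom (Λ.d l + q) := fun i => by
      rw [hdeg i]
      show ((Λ.d l i + q i : ℕ) : ℕ∞) ≤ _
      push_cast
      exact add_le_add le_rfl (hqx i)
    have hdomp : y.dom (Λ.d l + p) := dom_mono (add_le_add le_rfl hpq) hdomq
    obtain ⟨h1, e1⟩ := htail (Λ.d l + p) (fun i => Nat.le_add_right _ _) hdomp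
    obtain ⟨h2, e2⟩ := htail (Λ.d l + q) (fun i => Nat.le_add_right _ _) hdomq
    have h1' : Λ.s l = Λ.r (x.seg 0 p) := by
      rw [← pi_add_sub_cancel_left (Λ.d l) p]; exact h1
    have h2' : Λ.s l = Λ.r (x.seg 0 q) := by
      rw [← pi_add_sub_cancel_left (Λ.d l) q]; exact h2
    have e1' : y.seg 0 (Λ.d l + p) = Λ.comp l (x.seg 0 p) h1' :=
      e1.trans (comp_hcongr Λ rfl (congrArg (x.seg 0) (pi_add_sub_cancel_left _ _)) _ _)
    have e2' : y.seg 0 (Λ.d l + q) = Λ.comp l (x.seg 0 q) h2' :=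
      e2.trans (comp_hcongr Λ rfl (congrArg (x.seg 0) (pi_add_sub_cancel_left _ _)) _ _)
    obtain ⟨h3, e3⟩ := x.seg_comp 0 p q (pi_zero_le p) hpq hqx
    obtain ⟨h4, e4⟩ := y.seg_comp 0 (Λ.d l + p) (Λ.d l + q) (pi_zero_le _)
      (add_le_add le_rfl hpq) hdomq
    have h' : Λ.s (y.seg 0 (Λ.d l + p)) = Λ.r (x.seg p q) := by
      rw [e1', Λ.s_comp]; exact h3
    have H1 : Λ.s (Λ.comp l (x.seg 0 p) h1') = Λ.r (x.seg p q) := by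
      rw [Λ.s_comp]; exact h3
    have H2 : Λ.s l = Λ.r (Λ.comp (x.seg 0 p) (x.seg p q) h3) := by
      rw [Λ.r_comp]; exact h1'
    have hco : Λ.comp (y.seg 0 (Λ.d l + p)) (y.seg (Λ.d l + p) (Λ.d l + q)) h4
        = Λ.comp (y.seg 0 (Λ.d l + p)) (x.seg p q) h' := by
      calc Λ.comp (y.seg 0 (Λ.d l + p)) (y.seg (Λ.d l + p) (Λ.d l + q)) h4
          = y.seg 0 (Λ.d l + q) := e4
        _ = Λ.comp l (x.seg 0 q) h2' := e2'
        _ = Λ.comp l (Λ.comp (x.seg 0 p) (x.seg p q) h3) H2 :=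
            comp_hcongr Λ rfl e3.symm _ _
        _ = Λ.comp (Λ.comp l (x.seg 0 p) h1') (x.seg p q) H1 :=
            (Λ.comp_assoc l (x.seg 0 p) (x.seg p q) h1' h3 H1 H2).symm
        _ = Λ.comp (y.seg 0 (Λ.d l + p)) (x.seg p q) h' :=
            comp_hcongr Λ e1'.symm rfl _ _
    have hdg : Λ.d (y.seg (Λ.d l + p) (Λ.d l + q)) = Λ.d (x.seg p q) := by
      rw [y.d_seg _ _ (add_le_add le_rfl hpq) hdomq, x.d_seg p q hpq hqx]
      funext i
      show Λ.d l i + q i - (Λ.d l i + p i) = q i - p i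
      omega
    exact (comp_cancel_left Λ h4 h' hdg hco).symm
  · rintro ⟨hdom, hseg, hd1, hd2, hs3⟩
    have e0 : x.seg 0 0 = y.seg (Λ.d l) (Λ.d l) := by
      have h := hs3 0 0 le_rfl (dom_zero x)
      simpa using h
    obtain ⟨hh, _⟩ := y.seg_comp 0 (Λ.d l) (Λ.d l) (pi_zero_le _) le_rfl hdom
    refine ⟨?_, ?_, ?_, ?_⟩
    · show Λ.s l = Λ.r (x.seg 0 0)
      calc Λ.s l = Λ.s (y.seg 0 (Λ.d l)) := congrArg Λ.s hseg.symm
        _ = Λ.r (y.seg (Λ.d l) (Λ.d l)) := hh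
        _ = Λ.r (x.seg 0 0) := congrArg Λ.r e0.symm
    · intro i; rw [hd2 i]; exact (add_tsub_cancel_of_le (hd1 i)).symm
    · intro p hp
      obtain ⟨h, e⟩ := y.seg_comp 0 p (Λ.d l) (pi_zero_le p) hp hdom
      exact ⟨y.seg p (Λ.d l), h,
        by rw [y.d_seg 0 p (pi_zero_le p) (dom_mono hp hdom)]; exact pi_sub_zero p,
        by rw [e]; exact hseg⟩
    · intro p hdl hdomp
      have hxdom : ∀ i, (((p - Λ.d l) i : ℕ) : ℕ∞) ≤ x.deg i := by
        intro i
        rw [hd2 i]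
        show (((p i - Λ.d l i : ℕ)) : ℕ∞) ≤ _
        rw [ENat.coe_sub]
        exact tsub_le_tsub_right (hdomp i) _
      have ex : x.seg 0 (p - Λ.d l) = y.seg (Λ.d l) p := by
        have h := hs3 0 (p - Λ.d l) (pi_zero_le _) hxdom
        rw [h]
        congr 1 <;> simp [pi_sub_sub_self _ _ hdl]
      obtain ⟨h, e⟩ := y.seg_comp 0 (Λ.d l) p (pi_zero_le _) hdl hdomp
      have h' : Λ.s l = Λ.r (x.seg 0 (p - Λ.d l)) :=
        calc Λ.s l = Λ.s (y.seg 0 (Λ.d l)) := congrArg Λ.s hseg.symm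
          _ = Λ.r (y.seg (Λ.d l) p) := h
          _ = Λ.r (x.seg 0 (p - Λ.d l)) := congrArg Λ.r ex.symm
      exact ⟨h', by rw [← e]; exact comp_hcongr Λ hseg ex.symm _ _⟩

/-- A shift witness yields a concatenation witness. -/
theorem shift_concat {p : Fin k → ℕ} {x z : KPath Λ} (h : IsShiftOf p x z) :
    IsConcatOf (x.seg 0 p) z x := by
  have hd : Λ.d (x.seg 0 p) = p := by rw [x.d_seg 0 p (pi_zero_le p) h.1, pi_sub_zero]
  rw [isConcatOf_iff, hd]
  exact ⟨h.1, rfl, h⟩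

theorem IsConcatOf.dom_d {l : Mor} {x y : KPath Λ} (h : IsConcatOf l x y) :
    y.dom (Λ.d l) := fun i => by rw [h.2.1 i]; exact le_self_add

/-- `ZGW Λ t L M`: `(L, M)` is a cylinder witness for the triple `t`. -/
def ZGW (Λ : TopKGraph k Obj Mor) (t : GTriple Λ) (L M : Mor) : Prop :=
  Λ.s L = Λ.s M ∧ (fun i => (Λ.d L i : ℤ) - (Λ.d M i : ℤ)) = t.2.1 ∧
    ∃ x', IsConcatOf L x' t.1 ∧ IsConcatOf M x' t.2.2

theorem mem_ZG_iff {Λ : TopKGraph k Obj Mor} {F : Set (Mor × Mor)} {m : Fin k → ℤ}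
    {t : GTriple Λ} :
    t ∈ ZG Λ F m ↔ t.2.1 = m ∧ ∃ L M, (L, M) ∈ F ∧ ZGW Λ t L M := by
  constructor
  · rintro ⟨h1, ⟨L, M⟩, hF, hs, hdeg, x', hc1, hc2⟩
    exact ⟨h1, L, M, hF, hs, hdeg.trans h1.symm, x', hc1, hc2⟩
  · rintro ⟨h1, L, M, hF, hs, hdeg, x', hc1, hc2⟩
    exact ⟨h1, ⟨L, M⟩, hF, hs, hdeg.trans h1, x', hc1, hc2⟩

theorem ZGW_of_shifts {t : GTriple Λ} {p q : Fin k → ℕ} {z : KPath Λ}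
    (hx : IsShiftOf p t.1 z) (hy : IsShiftOf q t.2.2 z)
    (hm : t.2.1 = fun i => (p i : ℤ) - (q i : ℤ)) :
    ZGW Λ t (t.1.seg 0 p) (t.2.2.seg 0 q) := by
  have hdp : Λ.d (t.1.seg 0 p) = p := by rw [t.1.d_seg 0 p (pi_zero_le p) hx.1, pi_sub_zero]
  have hdq : Λ.d (t.2.2.seg 0 q) = q := by
    rw [t.2.2.d_seg 0 q (pi_zero_le q) hy.1, pi_sub_zero]
  refine ⟨?_, ?_, z, shift_concat hx, shift_concat hy⟩
  · rw [(shift_concat hx).1, (shift_concat hy).1]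
  · rw [hdp, hdq, hm]

theorem exists_ZGW {t : GTriple Λ} (h : t ∈ PathGroupoidCarrier Λ) :
    ∃ L M, ZGW Λ t L M := by
  obtain ⟨p, q, hm, z, hx, hy⟩ := h
  exact ⟨_, _, ZGW_of_shifts hx hy hm⟩

theorem pi_sub_self (p : Fin k → ℕ) : p - p = 0 := by
  funext i; show p i - p i = 0; omega

/-! ### groupoid topology helpers -/

/-- The generating family of the groupoid topology. -/
def ZGens (Λ : TopKGraph k Obj Mor) : Set (Set (GTriple Λ)) :=
  {S | ∃ (m : Fin k → ℤ) (U V : Set Mor) (F : Set (Mor × Mor)),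
    IsOpen U ∧ IsOpen V ∧ IsCompact F ∧
    S = ZG Λ ((U ×ˢ V) ∩ {lm | Λ.s lm.1 = Λ.s lm.2}) m ∩ (ZG Λ F m)ᶜ}

theorem groupoidTopology_eq (Λ : TopKGraph k Obj Mor) :
    groupoidTopology Λ = TopologicalSpace.generateFrom (ZGens Λ) := rfl

theorem ZG_empty (Λ : TopKGraph k Obj Mor) (m : Fin k → ℤ) :
    ZG Λ (∅ : Set (Mor × Mor)) m = ∅ := by
  ext t
  simp [ZG]

theorem generateOpen_ZG_basic {U V : Set Mor} (hU : IsOpen U) (hV : IsOpen V)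
    (m : Fin k → ℤ) :
    TopologicalSpace.GenerateOpen (ZGens Λ)
      (ZG Λ ((U ×ˢ V) ∩ {lm | Λ.s lm.1 = Λ.s lm.2}) m) := by
  have h : ZG Λ ((U ×ˢ V) ∩ {lm | Λ.s lm.1 = Λ.s lm.2}) m
      = ZG Λ ((U ×ˢ V) ∩ {lm | Λ.s lm.1 = Λ.s lm.2}) m ∩ (ZG Λ ∅ m)ᶜ := by
    rw [ZG_empty]
    simp
  rw [h]
  exact TopologicalSpace.GenerateOpen.basic _
    ⟨m, U, V, ∅, hU, hV, isCompact_empty, rfl⟩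

theorem mem_ZG_univ {t : GTriple Λ} (ht : t ∈ PathGroupoidCarrier Λ) :
    t ∈ ZG Λ ((Set.univ ×ˢ Set.univ) ∩ {lm | Λ.s lm.1 = Λ.s lm.2}) t.2.1 := by
  obtain ⟨L, M, hw⟩ := exists_ZGW ht
  exact mem_ZG_iff.2 ⟨rfl, L, M, ⟨⟨trivial, trivial⟩, hw.1⟩, hw⟩

theorem isOpen_preimage_of_generateOpen {S : Set (GTriple Λ)}
    (h : TopologicalSpace.GenerateOpen (ZGens Λ) S) :
    IsOpen {p : BdryGpd Λ | Subtype.val p ∈ S} := by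
  letI : TopologicalSpace (GTriple Λ) := groupoidTopology Λ
  have hS : IsOpen S := h
  exact hS.preimage continuous_induced_dom

theorem isOpen_preimage_ZG_basic {U V : Set Mor} (hU : IsOpen U) (hV : IsOpen V)
    (m : Fin k → ℤ) :
    IsOpen {p : BdryGpd Λ |
      Subtype.val p ∈ ZG Λ ((U ×ˢ V) ∩ {lm | Λ.s lm.1 = Λ.s lm.2}) m} :=
  isOpen_preimage_of_generateOpen (generateOpen_ZG_basic hU hV m)

theorem isOpen_preimage_compl_ZG {F : Set (Mor × Mor)} {m : Fin k → ℤ}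
    (hF : IsCompact F) :
    IsOpen {p : BdryGpd Λ | Subtype.val p ∈ (ZG Λ F m)ᶜ} := by
  classical
  letI : TopologicalSpace (GTriple Λ) := groupoidTopology Λ
  have h1 : IsOpen (ZG Λ ((Set.univ ×ˢ Set.univ) ∩ {lm | Λ.s lm.1 = Λ.s lm.2}) m
      ∩ (ZG Λ F m)ᶜ) :=
    TopologicalSpace.GenerateOpen.basic _
      ⟨m, Set.univ, Set.univ, F, isOpen_univ, isOpen_univ, hF, rfl⟩
  have h2 : IsOpen (⋃ (m' : {n : Fin k → ℤ // n ≠ m}),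
      ZG Λ ((Set.univ ×ˢ Set.univ) ∩ {lm | Λ.s lm.1 = Λ.s lm.2}) m'.val) :=
    isOpen_iUnion fun m' => generateOpen_ZG_basic isOpen_univ isOpen_univ m'.val
  have hOopen : IsOpen ((ZG Λ ((Set.univ ×ˢ Set.univ) ∩ {lm | Λ.s lm.1 = Λ.s lm.2}) m
      ∩ (ZG Λ F m)ᶜ) ∪ ⋃ (m' : {n : Fin k → ℤ // n ≠ m}),
        ZG Λ ((Set.univ ×ˢ Set.univ) ∩ {lm | Λ.s lm.1 = Λ.s lm.2}) m'.val) := h1.union h2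
  have hsub : {p : BdryGpd Λ | Subtype.val p ∈
        (ZG Λ ((Set.univ ×ˢ Set.univ) ∩ {lm | Λ.s lm.1 = Λ.s lm.2}) m ∩ (ZG Λ F m)ᶜ) ∪
          ⋃ (m' : {n : Fin k → ℤ // n ≠ m}),
            ZG Λ ((Set.univ ×ˢ Set.univ) ∩ {lm | Λ.s lm.1 = Λ.s lm.2}) m'.val}
      = {p : BdryGpd Λ | Subtype.val p ∈ (ZG Λ F m)ᶜ} := by
    ext ⟨t, htcar, htb⟩
    constructor
    · intro hp
      rcases hp with hp | hp
      · exact hp.2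
      · obtain ⟨m', hm'⟩ := Set.mem_iUnion.1 hp
        intro hmem
        exact m'.prop ((mem_ZG_iff.1 hm').1.symm.trans (mem_ZG_iff.1 hmem).1)
    · intro hp
      by_cases hm : t.2.1 = m
      · exact Or.inl ⟨by rw [← hm]; exact mem_ZG_univ htcar, hp⟩
      · exact Or.inr (Set.mem_iUnion.2 ⟨⟨t.2.1, hm⟩, mem_ZG_univ htcar⟩)
  rw [← hsub]
  exact hOopen.preimage continuous_induced_dom

theorem ZGW_initseg {t : GTriple Λ} {L M : Mor} (hw : ZGW Λ t L M) :
    t.1.seg 0 (Λ.d L) = L ∧ t.2.2.seg 0 (Λ.d M) = M := by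
  obtain ⟨_, _, x', hc1, hc2⟩ := hw
  exact ⟨(isConcatOf_iff.1 hc1).2.1, (isConcatOf_iff.1 hc2).2.1⟩

section Skew

variable {A : Type} [TopologicalSpace A] [Group A]

/-- Bundle of the structural hypotheses describing `SP` as the skew product `Λ ×_c A`. -/
structure Skew (Λ : TopKGraph k Obj Mor) (SP : TopKGraph k (Obj × A) (Mor × A))
    (c : Mor → A) : Prop where
  hr : SP.r = fun p => (Λ.r p.1, p.2)
  hs : SP.s = fun p => (Λ.s p.1, p.2 * c p.1)
  hd : SP.d = fun p => Λ.d p.1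
  hcomp : ∀ (f g : Mor × A) (h : SP.s f = SP.r g) (h' : Λ.s f.1 = Λ.r g.1),
      SP.comp f g h = (Λ.comp f.1 g.1 h', f.2)
  hmul : ∀ (f g : Mor) (h : Λ.s f = Λ.r g), c (Λ.comp f g h) = c f * c g
  hone : ∀ v : Obj, c (Λ.ident v) = 1

variable {SP : TopKGraph k (Obj × A) (Mor × A)} {c : Mor → A}

theorem Skew.sr {E : Skew Λ SP c} {f g : Mor × A} (h : SP.s f = SP.r g) :
    Λ.s f.1 = Λ.r g.1 ∧ g.2 = f.2 * c f.1 := by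
  rw [E.hs, E.hr] at h
  exact ⟨congrArg Prod.fst h, (congrArg Prod.snd h).symm⟩

/-- The projection of a path of `SP` to a path of `Λ`. -/
def projPath (E : Skew Λ SP c) (X : KPath SP) : KPath Λ where
  deg := X.deg
  seg p q := (X.seg p q).1
  seg_junk p q h := congrArg Prod.fst (X.seg_junk p q h)
  d_seg p q hpq hq := by
    have h := X.d_seg p q hpq hq
    simp only [E.hd] at h
    exact h
  seg_comp p q u hpq hqu hu := by
    obtain ⟨h, e⟩ := X.seg_comp p q u hpq hqu hu
    have h' : Λ.s (X.seg p q).1 = Λ.r (X.seg q u).1 := (Skew.sr (E := E) h).1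
    refine ⟨h', ?_⟩
    rw [E.hcomp _ _ h h'] at e
    exact congrArg Prod.fst e
  seg_ident p hp := by
    have h0 : Λ.d (X.seg p p).1 = 0 := by
      have h := X.d_seg p p le_rfl hp
      simp only [E.hd] at h
      rw [h, pi_sub_self]
    exact eq_ident_of_d_eq_zero Λ h0

/-- The group coordinate of a path of the skew product. -/
def aOf (X : KPath SP) : A := (X.seg 0 0).2

theorem snd_seg_zero (E : Skew Λ SP c) (X : KPath SP) {p : Fin k → ℕ} (hp : X.dom p) :
    (X.seg 0 p).2 = aOf X := by
  obtain ⟨h, e⟩ := X.seg_comp 0 0 p le_rfl (pi_zero_le p) hp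
  have h' : Λ.s (X.seg 0 0).1 = Λ.r (X.seg 0 p).1 := (Skew.sr (E := E) h).1
  rw [E.hcomp _ _ h h'] at e
  exact (congrArg Prod.snd e).symm

theorem seg_eq_phi (E : Skew Λ SP c) (X : KPath SP) {p q : Fin k → ℕ}
    (hpq : p ≤ q) (hq : X.dom q) :
    X.seg p q = ((X.seg p q).1, aOf X * c ((X.seg 0 p).1)) := by
  obtain ⟨h, _⟩ := X.seg_comp 0 p q (pi_zero_le p) hpq hq
  have h2 : (X.seg p q).2 = (X.seg 0 p).2 * c ((X.seg 0 p).1) := (Skew.sr (E := E) h).2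
  rw [snd_seg_zero E X (dom_mono hpq hq)] at h2
  rw [← h2]

theorem isPhiOf_proj (E : Skew Λ SP c) (X : KPath SP) :
    IsPhiOf Λ SP c (projPath E X) (aOf X) X :=
  ⟨rfl, fun p q hpq hq => seg_eq_phi E X hpq hq⟩

open Classical in
/-- The path `φ(x, a)` of the skew product. -/
noncomputable def phiPath (E : Skew Λ SP c) (x : KPath Λ) (a : A) : KPath SP where
  deg := x.deg
  seg p q := if h : p ≤ q ∧ x.dom q then (x.seg p q, a * c (x.seg 0 p)) else (x.seg 0 0, a)
  seg_junk p q h := by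
    have h' : ¬(p ≤ q ∧ x.dom q) := h
    rw [dif_neg h', dif_pos ⟨le_rfl, dom_zero x⟩]
    have h1 : c (x.seg 0 0) = 1 := by rw [x.seg_ident 0 (dom_zero x), E.hone]
    rw [h1, mul_one]
  d_seg p q hpq hq := by
    rw [dif_pos ⟨hpq, hq⟩, E.hd]
    exact x.d_seg p q hpq hq
  seg_comp p q u hpq hqu hu := by
    have hq : x.dom q := dom_mono hqu hu
    obtain ⟨h1, e1⟩ := x.seg_comp p q u hpq hqu hu
    obtain ⟨h0, e0⟩ := x.seg_comp 0 p q (pi_zero_le p) hpq hq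
    rw [dif_pos ⟨hpq, hq⟩, dif_pos ⟨hqu, hu⟩, dif_pos ⟨le_trans hpq hqu, hu⟩]
    have hS : SP.s (x.seg p q, a * c (x.seg 0 p)) = SP.r (x.seg q u, a * c (x.seg 0 q)) := by
      rw [E.hs, E.hr]
      dsimp only
      rw [← e0, E.hmul]
      exact congrArg₂ Prod.mk h1 (mul_assoc _ _ _)
    refine ⟨hS, ?_⟩
    rw [E.hcomp _ _ hS h1]
    dsimp only
    rw [e1]
  seg_ident p hp := by
    refine eq_ident_of_d_eq_zero SP ?_
    rw [dif_pos ⟨le_rfl, hp⟩, E.hd]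
    show Λ.d (x.seg p p) = 0
    rw [x.d_seg p p le_rfl hp, pi_sub_self]

theorem phiPath_isPhiOf (E : Skew Λ SP c) (x : KPath Λ) (a : A) :
    IsPhiOf Λ SP c x a (phiPath E x a) :=
  ⟨rfl, fun p q hpq hq => dif_pos ⟨hpq, hq⟩⟩

theorem phiPath_seg (E : Skew Λ SP c) (x : KPath Λ) (a : A) {p q : Fin k → ℕ}
    (hpq : p ≤ q) (hq : x.dom q) :
    (phiPath E x a).seg p q = (x.seg p q, a * c (x.seg 0 p)) := dif_pos ⟨hpq, hq⟩

theorem isPhiOf_unique (E : Skew Λ SP c) {x : KPath Λ} {a : A} {X : KPath SP}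
    (h : IsPhiOf Λ SP c x a X) : X = phiPath E x a :=
  kpath_ext h.1 (fun p q hpq hq => by
    rw [h.2 p q hpq hq, phiPath_seg E x a hpq hq])

theorem aOf_phiPath (E : Skew Λ SP c) (x : KPath Λ) (a : A) : aOf (phiPath E x a) = a := by
  show ((phiPath E x a).seg 0 0).2 = a
  rw [phiPath_seg E x a le_rfl (dom_zero x)]
  show a * c (x.seg 0 0) = a
  rw [x.seg_ident 0 (dom_zero x), E.hone, mul_one]

theorem proj_phiPath (E : Skew Λ SP c) (x : KPath Λ) (a : A) :
    projPath E (phiPath E x a) = x :=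
  kpath_ext rfl (fun p q hpq hq => by
    show ((phiPath E x a).seg p q).1 = x.seg p q
    rw [phiPath_seg E x a hpq hq])

theorem phiPath_proj (E : Skew Λ SP c) (X : KPath SP) :
    phiPath E (projPath E X) (aOf X) = X :=
  (isPhiOf_unique E (isPhiOf_proj E X)).symm


theorem shift_up (E : Skew Λ SP c) {m : Fin k → ℕ} {x z : KPath Λ} (a : A)
    (h : IsShiftOf m x z) :
    IsShiftOf m (phiPath E x a) (phiPath E z (a * c (x.seg 0 m))) := by
  obtain ⟨h1, h2, h3⟩ := h
  refine ⟨h1, h2, ?_⟩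
  intro p q hpq hq
  have hqz : z.dom q := hq
  have hqx : x.dom (m + q) := by
    intro i
    show ((m i + q i : ℕ) : ℕ∞) ≤ x.deg i
    push_cast
    have h4 := hqz i
    rw [h2 i] at h4
    calc (m i : ℕ∞) + q i ≤ (m i : ℕ∞) + (x.deg i - m i) := add_le_add le_rfl h4
      _ = x.deg i := add_tsub_cancel_of_le (h1 i)
  have hpx : x.dom (m + p) := dom_mono (add_le_add (le_refl m) hpq) hqx
  show (phiPath E z _).seg p q = (phiPath E x a).seg (m + p) (m + q)
  rw [phiPath_seg E z _ hpq hqz, phiPath_seg E x a (add_le_add (le_refl m) hpq) hqx]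
  rw [h3 p q hpq hqz, h3 0 p (pi_zero_le p) (dom_mono hpq hqz)]
  have hm0 : m + 0 = m := by funext i; show m i + 0 = m i; omega
  rw [hm0]
  obtain ⟨hh, ee⟩ := x.seg_comp 0 m (m + p) (pi_zero_le m) (fun i => Nat.le_add_right _ _) hpx
  rw [← ee, E.hmul, mul_assoc]

theorem shift_down (E : Skew Λ SP c) {m : Fin k → ℕ} {X Z : KPath SP}
    (h : IsShiftOf m X Z) : IsShiftOf m (projPath E X) (projPath E Z) :=
  ⟨h.1, h.2.1, fun p q hpq hq => congrArg Prod.fst (h.2.2 p q hpq hq)⟩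

theorem aOf_shift (E : Skew Λ SP c) {m : Fin k → ℕ} {X Z : KPath SP}
    (h : IsShiftOf m X Z) : aOf Z = aOf X * c ((X.seg 0 m).1) := by
  have e : Z.seg 0 0 = X.seg (m + 0) (m + 0) := h.2.2 0 0 le_rfl (dom_zero Z)
  have hm0 : m + 0 = m := by funext i; show m i + 0 = m i; omega
  rw [hm0] at e
  show (Z.seg 0 0).2 = aOf X * c ((X.seg 0 m).1)
  rw [e]
  exact congrArg Prod.snd (seg_eq_phi E X (le_refl m) h.1)

theorem concat_up (E : Skew Λ SP c) {l : Mor} {x' x : KPath Λ} (a : A)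
    (h : IsConcatOf l x' x) :
    IsConcatOf (l, a) (phiPath E x' (a * c l)) (phiPath E x a) := by
  rw [isConcatOf_iff] at h ⊢
  obtain ⟨hdom, hseg, hshift⟩ := h
  have hdl : SP.d (l, a) = Λ.d l := by rw [E.hd]
  rw [hdl]
  refine ⟨hdom, ?_, ?_⟩
  · show (phiPath E x a).seg 0 (Λ.d l) = (l, a)
    rw [phiPath_seg E x a (pi_zero_le _) hdom, hseg]
    rw [x.seg_ident 0 (dom_zero x), E.hone, mul_one]
  · have h5 := shift_up E a hshift
    rw [hseg] at h5
    exact h5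

theorem concat_down (E : Skew Λ SP c) {L : Mor × A} {X' X : KPath SP}
    (h : IsConcatOf L X' X) :
    L.2 = aOf X ∧ aOf X' = aOf X * c L.1 ∧
      IsConcatOf L.1 (projPath E X') (projPath E X) := by
  rw [isConcatOf_iff] at h
  obtain ⟨hdom, hseg, hshift⟩ := h
  have hdl : SP.d L = Λ.d L.1 := by rw [E.hd]
  rw [hdl] at hdom hseg hshift
  have h2 : L.2 = aOf X := by
    rw [← hseg]
    exact snd_seg_zero E X hdom
  have h3 : aOf X' = aOf X * c L.1 := by
    rw [aOf_shift E hshift, congrArg Prod.fst hseg]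
  refine ⟨h2, h3, ?_⟩
  rw [isConcatOf_iff]
  exact ⟨hdom, congrArg Prod.fst hseg, shift_down E hshift⟩

theorem c_seg_split (E : Skew Λ SP c) {L : Mor} {w x : KPath Λ} (h : IsConcatOf L w x)
    {P : Fin k → ℕ} (hle : Λ.d L ≤ P) (hdom : x.dom P) :
    c (x.seg 0 P) = c L * c (w.seg 0 (P - Λ.d L)) := by
  obtain ⟨h', e⟩ := h.2.2.2 P hle hdom
  rw [e, E.hmul]

theorem cval_well_defined (E : Skew Λ SP c) {t : GTriple Λ} {L M L' M' : Mor}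
    (h : ZGW Λ t L M) (h' : ZGW Λ t L' M') :
    c L * (c M)⁻¹ = c L' * (c M')⁻¹ := by
  obtain ⟨hsLM, hdeg, x1, hc1, hc2⟩ := h
  obtain ⟨hsLM', hdeg', x2, hc1', hc2'⟩ := h'
  have hdomp : t.1.dom (Λ.d L) := hc1.dom_d
  have hdomp' : t.1.dom (Λ.d L') := hc1'.dom_d
  have hdomq : t.2.2.dom (Λ.d M) := hc2.dom_d
  have hdomq' : t.2.2.dom (Λ.d M') := hc2'.dom_d
  have hdomP : t.1.dom (Λ.d L ⊔ Λ.d L') := dom_sup hdomp hdomp'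
  have hdomQ : t.2.2.dom (Λ.d M ⊔ Λ.d M') := dom_sup hdomq hdomq'
  have hZ : ∀ i, (Λ.d L i : ℤ) - Λ.d M i = (Λ.d L' i : ℤ) - Λ.d M' i := fun i => by
    rw [congrFun hdeg i, congrFun hdeg' i]
  have hr1 : Λ.d L ⊔ Λ.d L' - Λ.d L = Λ.d M ⊔ Λ.d M' - Λ.d M := by
    funext i
    have h6 := hZ i
    show Λ.d L i ⊔ Λ.d L' i - Λ.d L i = Λ.d M i ⊔ Λ.d M' i - Λ.d M i
    rcases le_total (Λ.d L i) (Λ.d L' i) with hcc | hcc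
    · have : Λ.d M i ≤ Λ.d M' i := by omega
      rw [sup_eq_right.2 hcc, sup_eq_right.2 this]; omega
    · have : Λ.d M' i ≤ Λ.d M i := by omega
      rw [sup_eq_left.2 hcc, sup_eq_left.2 this]; omega
  have hr2 : Λ.d L ⊔ Λ.d L' - Λ.d L' = Λ.d M ⊔ Λ.d M' - Λ.d M' := by
    funext i
    have h6 := hZ i
    show Λ.d L i ⊔ Λ.d L' i - Λ.d L' i = Λ.d M i ⊔ Λ.d M' i - Λ.d M' i
    rcases le_total (Λ.d L i) (Λ.d L' i) with hcc | hcc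
    · have : Λ.d M i ≤ Λ.d M' i := by omega
      rw [sup_eq_right.2 hcc, sup_eq_right.2 this]; omega
    · have : Λ.d M' i ≤ Λ.d M i := by omega
      rw [sup_eq_left.2 hcc, sup_eq_left.2 this]; omega
  have e1 := c_seg_split E hc1 (le_sup_left : Λ.d L ≤ _) hdomP
  have e2 := c_seg_split E hc2 (le_sup_left : Λ.d M ≤ _) hdomQ
  have e1' := c_seg_split E hc1' (le_sup_right : Λ.d L' ≤ _) hdomP
  have e2' := c_seg_split E hc2' (le_sup_right : Λ.d M' ≤ _) hdomQ
  rw [hr1] at e1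
  rw [hr2] at e1'
  have E1 : c L * (c M)⁻¹
      = c (t.1.seg 0 (Λ.d L ⊔ Λ.d L')) * (c (t.2.2.seg 0 (Λ.d M ⊔ Λ.d M')))⁻¹ := by
    rw [e1, e2]; group
  have E2 : c L' * (c M')⁻¹
      = c (t.1.seg 0 (Λ.d L ⊔ Λ.d L')) * (c (t.2.2.seg 0 (Λ.d M ⊔ Λ.d M')))⁻¹ := by
    rw [e1', e2']; group
  rw [E1, E2]

open Classical in
/-- The cocycle value `c̃(t)` of a groupoid element. -/
noncomputable def cval (c : Mor → A) (Λ : TopKGraph k Obj Mor) (t : GTriple Λ) : A :=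
  if h : ∃ LM : Mor × Mor, ZGW Λ t LM.1 LM.2 then c h.choose.1 * (c h.choose.2)⁻¹ else 1

theorem cval_eq (E : Skew Λ SP c) {t : GTriple Λ} {L M : Mor} (h : ZGW Λ t L M) :
    cval c Λ t = c L * (c M)⁻¹ := by
  have hex : ∃ LM : Mor × Mor, ZGW Λ t LM.1 LM.2 := ⟨(L, M), h⟩
  rw [cval, dif_pos hex]
  exact cval_well_defined E hex.choose_spec h

theorem mem_ZG_down (E : Skew Λ SP c) {F : Set ((Mor × A) × (Mor × A))}
    {m m₀ : Fin k → ℤ} {X Y : KPath SP}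
    (h : ((X, m₀, Y) : GTriple SP) ∈ ZG SP F m) :
    m₀ = m ∧ ∃ L M, ZGW Λ (projPath E X, m₀, projPath E Y) L M ∧
      ((L, aOf X), (M, aOf X * (c L * (c M)⁻¹))) ∈ F ∧
      aOf Y = aOf X * (c L * (c M)⁻¹) := by
  rw [mem_ZG_iff] at h
  obtain ⟨h1, LL, MM, hF, hsLM, hdeg, X', hc1, hc2⟩ := h
  obtain ⟨ha, ha', hcl⟩ := concat_down E hc1
  obtain ⟨hb, hb', hcm⟩ := concat_down E hc2
  have hXY : aOf X * c LL.1 = aOf Y * c MM.1 := ha'.symm.trans hb'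
  have hbRel : aOf Y = aOf X * (c LL.1 * (c MM.1)⁻¹) := by
    calc aOf Y = aOf Y * c MM.1 * (c MM.1)⁻¹ := by group
      _ = aOf X * c LL.1 * (c MM.1)⁻¹ := by rw [← hXY]
      _ = aOf X * (c LL.1 * (c MM.1)⁻¹) := by group
  have hsl : Λ.s LL.1 = Λ.s MM.1 := by
    have h7 := hsLM
    rw [E.hs] at h7
    exact congrArg Prod.fst h7
  have hdegl : (fun i => (Λ.d LL.1 i : ℤ) - (Λ.d MM.1 i : ℤ)) = m₀ := by
    simp only [E.hd] at hdeg
    exact hdeg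
  refine ⟨h1, LL.1, MM.1, ⟨hsl, hdegl, projPath E X', hcl, hcm⟩, ?_, hbRel⟩
  have eL : (LL.1, aOf X) = LL := by rw [← ha]
  have eM : (MM.1, aOf X * (c LL.1 * (c MM.1)⁻¹)) = MM := by rw [← hbRel, ← hb]
  rw [eL, eM]
  exact hF

theorem mem_ZG_up (E : Skew Λ SP c) {F : Set ((Mor × A) × (Mor × A))} {m m₀ : Fin k → ℤ}
    {x y : KPath Λ} {L M : Mor} (a : A)
    (h1 : m₀ = m) (hw : ZGW Λ (x, m₀, y) L M)
    (hF : ((L, a), (M, a * (c L * (c M)⁻¹))) ∈ F) :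
    ((phiPath E x a, m₀, phiPath E y (a * (c L * (c M)⁻¹))) : GTriple SP) ∈ ZG SP F m := by
  rw [mem_ZG_iff]
  obtain ⟨hsLM, hdeg, x', hc1, hc2⟩ := hw
  refine ⟨h1, (L, a), (M, a * (c L * (c M)⁻¹)), hF, ?_, ?_, phiPath E x' (a * c L), ?_, ?_⟩
  · rw [E.hs]
    exact congrArg₂ Prod.mk hsLM (by group)
  · simp only [E.hd]
    exact hdeg
  · exact concat_up E a hc1
  · have h8 := concat_up E (a * (c L * (c M)⁻¹)) hc2
    have hbm : a * (c L * (c M)⁻¹) * c M = a * c L := by group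
    rw [hbm] at h8
    exact h8

theorem phi_mem_ZG_iff (E : Skew Λ SP c) {F : Set ((Mor × A) × (Mor × A))}
    {m : Fin k → ℤ} {t : GTriple Λ} (a : A) :
    ((phiPath E t.1 a, t.2.1, phiPath E t.2.2 (a * cval c Λ t)) : GTriple SP) ∈ ZG SP F m ↔
      t.2.1 = m ∧ ∃ L M, ZGW Λ t L M ∧
        ((L, a), (M, a * (c L * (c M)⁻¹))) ∈ F := by
  constructor
  · intro h
    obtain ⟨h1, L, M, hw, hF, hb⟩ := mem_ZG_down E h
    rw [proj_phiPath, proj_phiPath] at hw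
    rw [aOf_phiPath] at hF
    exact ⟨h1, L, M, hw, hF⟩
  · rintro ⟨h1, L, M, hw, hF⟩
    have h9 := mem_ZG_up E a h1 hw hF
    rw [cval_eq E hw]
    exact h9


theorem minExt_transfer (E : Skew Λ SP c) {l m : Mor} {g g' : A} :
    (MinExt SP (l, g) (m, g')).Nonempty ↔ g = g' ∧ (MinExt Λ l m).Nonempty := by
  constructor
  · rintro ⟨⟨ab1, ab2⟩, h1, h2, hco, hdeg⟩
    have k1 := (Skew.sr (E := E) h1).1
    have k2 := (Skew.sr (E := E) h2).1
    rw [E.hcomp _ _ h1 k1, E.hcomp _ _ h2 k2] at hco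
    have hg : g = g' := congrArg Prod.snd hco
    refine ⟨hg, ⟨(ab1.1, ab2.1), k1, k2, congrArg Prod.fst hco, ?_⟩⟩
    simp only [E.hd] at hdeg
    exact hdeg
  · rintro ⟨hg, ⟨ab1, ab2⟩, k1, k2, hco, hdeg⟩
    subst hg
    have H1 : SP.s (l, g) = SP.r (ab1, g * c l) := by
      rw [E.hs, E.hr]
      exact congrArg₂ Prod.mk k1 rfl
    have H2 : SP.s (m, g) = SP.r (ab2, g * c m) := by
      rw [E.hs, E.hr]
      exact congrArg₂ Prod.mk k2 rfl
    refine ⟨((ab1, g * c l), (ab2, g * c m)), H1, H2, ?_, ?_⟩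
    · rw [E.hcomp _ _ H1 k1, E.hcomp _ _ H2 k2]
      exact congrArg₂ Prod.mk hco rfl
    · show SP.d (l, g) + SP.d (ab1, g * c l) = SP.d (l, g) ⊔ SP.d (m, g)
      simp only [E.hd]
      exact hdeg

theorem phi_vtx (E : Skew Λ SP c) (x : KPath Λ) (a : A) {m : Fin k → ℕ} (hm : x.dom m) :
    (phiPath E x a).vtx m = (x.vtx m, a * c (x.seg 0 m)) := by
  show SP.r ((phiPath E x a).seg m m) = _
  rw [phiPath_seg E x a le_rfl hm, E.hr]
  rfl

theorem isBoundary_phi_of (E : Skew Λ SP c) [T2Space A] {x : KPath Λ} (a : A)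
    (hx : IsBoundary x) : IsBoundary (phiPath E x a) := by
  haveI := SP.t2Mor
  intro m hm Ecp hEcp
  have hmx : x.dom m := hm
  rw [phi_vtx E x a hmx] at hEcp
  obtain ⟨hEc, hEnhds, hEexh⟩ := hEcp
  set b := a * c (x.seg 0 m) with hbdef
  set E' : Set Mor := Prod.fst '' (Ecp ∩ Prod.snd ⁻¹' {b}) with hE'
  have hE'c : IsCompact E' :=
    (hEc.inter_right (isClosed_singleton.preimage continuous_snd)).image continuous_fst
  have hE'nhds : Λ.r '' E' ∈ nhds (x.vtx m) := by
    have hcont : Continuous (fun w : Obj => (w, b)) := continuous_id.prodMk continuous_const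
    have h10 : (fun w : Obj => (w, b)) ⁻¹' (SP.r '' Ecp) ∈ nhds (x.vtx m) :=
      hcont.continuousAt.preimage_mem_nhds hEnhds
    refine Filter.mem_of_superset h10 ?_
    rintro w ⟨⟨f, g⟩, hfE, hfr⟩
    rw [E.hr] at hfr
    have hg : g = b := congrArg Prod.snd hfr
    exact ⟨f, ⟨(f, g), ⟨hfE, hg⟩, rfl⟩, congrArg Prod.fst hfr⟩
  have hE'exh : Exhaustive Λ (Λ.r '' E') E' := by
    rintro l ⟨f0, ⟨F0, ⟨hF0E, hF0b⟩, rfl⟩, hrf0⟩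
    have hF0b' : F0.2 = b := hF0b
    have hmem : SP.r (l, b) ∈ SP.r '' Ecp := by
      refine ⟨F0, hF0E, ?_⟩
      rw [E.hr]
      show (Λ.r F0.1, F0.2) = (Λ.r l, b)
      exact congrArg₂ Prod.mk hrf0 hF0b'
    obtain ⟨Mm, hMmE, hminSP⟩ := hEexh (l, b) hmem
    obtain ⟨hgb, hne⟩ := (minExt_transfer (l := l) (g := b) (m := Mm.1) (g' := Mm.2) E).1 hminSP
    exact ⟨Mm.1, ⟨Mm, ⟨hMmE, show Mm.2 = b from hgb.symm⟩, rfl⟩, hne⟩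
  obtain ⟨l, hlE', hdoml, hsegl⟩ := hx m hmx E' ⟨hE'c, hE'nhds, hE'exh⟩
  obtain ⟨F0, ⟨hF0E, hF0b⟩, hF0fst⟩ := hlE'
  have hF0b' : F0.2 = b := hF0b
  have hdF0 : SP.d F0 = Λ.d l := by rw [E.hd]; show Λ.d F0.1 = Λ.d l; rw [hF0fst]
  refine ⟨F0, hF0E, ?_, ?_⟩
  · show (phiPath E x a).dom (m + SP.d F0)
    rw [hdF0]
    exact hdoml
  · show (phiPath E x a).seg m (m + SP.d F0) = F0
    rw [hdF0, phiPath_seg E x a (p := m) (q := m + Λ.d l)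
      (fun i => Nat.le_add_right _ _) hdoml, hsegl]
    calc ((l, b) : Mor × A) = (F0.1, F0.2) := (congrArg₂ Prod.mk hF0fst hF0b').symm
      _ = F0 := Prod.mk.eta

theorem isBoundary_phi_inv (E : Skew Λ SP c) [LocallyCompactSpace A] {x : KPath Λ} (a : A)
    (hX : IsBoundary (phiPath E x a)) : IsBoundary x := by
  intro m hmx Ecp hEcp
  obtain ⟨hEc, hEnhds, hEexh⟩ := hEcp
  set b := a * c (x.seg 0 m) with hbdef
  obtain ⟨K, hKc, hKnhds⟩ := exists_compact_mem_nhds b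
  have him : SP.r '' (Ecp ×ˢ K) = (Λ.r '' Ecp) ×ˢ K := by
    ext ⟨u, v⟩
    constructor
    · rintro ⟨⟨f, g⟩, ⟨hf, hg⟩, heq⟩
      rw [E.hr] at heq
      have h1 : Λ.r f = u := congrArg Prod.fst heq
      have h2 : g = v := congrArg Prod.snd heq
      exact ⟨⟨f, hf, h1⟩, h2 ▸ hg⟩
    · rintro ⟨⟨f, hf, hrf⟩, hv⟩
      refine ⟨(f, v), ⟨hf, hv⟩, ?_⟩
      rw [E.hr]
      show (Λ.r f, v) = (u, v)
      rw [hrf]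
  have hCE : Ecp ×ˢ K ∈ CE SP ((phiPath E x a).vtx m) := by
    rw [phi_vtx E x a hmx]
    refine ⟨hEc.prod hKc, ?_, ?_⟩
    · rw [him]
      exact prod_mem_nhds hEnhds hKnhds
    · rintro ⟨l, g⟩ hrl
      rw [him] at hrl
      have hrl' : (Λ.r l, g) ∈ (Λ.r '' Ecp) ×ˢ K := by
        have : SP.r (l, g) = (Λ.r l, g) := by rw [E.hr]
        rw [← this]
        exact hrl
      obtain ⟨m', hm'E, hne⟩ := hEexh l hrl'.1
      refine ⟨(m', g), ⟨hm'E, hrl'.2⟩, ?_⟩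
      exact (minExt_transfer (l := l) (g := g) (m := m') (g' := g) E).2 ⟨rfl, hne⟩
  obtain ⟨⟨l, g⟩, ⟨hlE, hgK⟩, hdom, hseg⟩ := hX m hmx (Ecp ×ˢ K) hCE
  have hd' : SP.d (l, g) = Λ.d l := by rw [E.hd]
  rw [hd'] at hdom hseg
  have hdomx : x.dom (m + Λ.d l) := hdom
  refine ⟨l, hlE, hdomx, ?_⟩
  have := hseg
  rw [phiPath_seg E x a (p := m) (q := m + Λ.d l)
    (fun i => Nat.le_add_right _ _) hdomx] at this
  exact congrArg Prod.fst this

theorem isBoundary_phi_iff (E : Skew Λ SP c) [T2Space A] [LocallyCompactSpace A]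
    {x : KPath Λ} (a : A) : IsBoundary (phiPath E x a) ↔ IsBoundary x :=
  ⟨isBoundary_phi_inv E a, fun h => isBoundary_phi_of E a h⟩


/-- The underlying triple map of `Φ`. -/
noncomputable def phiTriple (E : Skew Λ SP c) (t : GTriple Λ) (a : A) : GTriple SP :=
  (phiPath E t.1 a, t.2.1, phiPath E t.2.2 (a * cval c Λ t))

theorem phiTriple_carrier (E : Skew Λ SP c) {t : GTriple Λ}
    (ht : t ∈ PathGroupoidCarrier Λ) (a : A) :
    phiTriple E t a ∈ PathGroupoidCarrier SP := by
  obtain ⟨p, q, hm, z, hxs, hys⟩ := ht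
  refine ⟨p, q, hm, phiPath E z (a * c (t.1.seg 0 p)), shift_up E a hxs, ?_⟩
  have h1 := shift_up E (a * cval c Λ t) hys
  have hcv : cval c Λ t = c (t.1.seg 0 p) * (c (t.2.2.seg 0 q))⁻¹ :=
    cval_eq E (ZGW_of_shifts hxs hys hm)
  have h2 : a * cval c Λ t * c (t.2.2.seg 0 q) = a * c (t.1.seg 0 p) := by
    rw [hcv]; group
  rw [h2] at h1
  exact h1

variable [T2Space A]

/-- The map `Φ : 𝒢_Λ(c̃) → 𝒢_{Λ ×_c A}`. -/
noncomputable def PhiMap (E : Skew Λ SP c) : BdryGpd Λ × A → BdryGpd SP :=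
  fun p => ⟨phiTriple E p.1.val p.2,
    phiTriple_carrier E p.1.prop.1 p.2,
    isBoundary_phi_of E _ p.1.prop.2.1,
    isBoundary_phi_of E _ p.1.prop.2.2⟩

theorem phiMap_injective (E : Skew Λ SP c) : Function.Injective (PhiMap E) := by
  rintro ⟨⟨t, ht⟩, a⟩ ⟨⟨t', ht'⟩, a'⟩ h
  have hv : phiTriple E t a = phiTriple E t' a' := congrArg Subtype.val h
  have h1 : phiPath E t.1 a = phiPath E t'.1 a' := congrArg Prod.fst hv
  have h2 : t.2.1 = t'.2.1 := congrArg (fun w => w.2.1) hv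
  have h3 : phiPath E t.2.2 (a * cval c Λ t) = phiPath E t'.2.2 (a' * cval c Λ t') :=
    congrArg (fun w => w.2.2) hv
  have hx : t.1 = t'.1 := by
    rw [← proj_phiPath E t.1 a, ← proj_phiPath E t'.1 a', h1]
  have ha : a = a' := by
    rw [← aOf_phiPath E t.1 a, ← aOf_phiPath E t'.1 a', h1]
  have hy : t.2.2 = t'.2.2 := by
    rw [← proj_phiPath E t.2.2 (a * cval c Λ t),
      ← proj_phiPath E t'.2.2 (a' * cval c Λ t'), h3]
  have ht : t = t' := Prod.ext_iff.2 ⟨hx, Prod.ext_iff.2 ⟨h2, hy⟩⟩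
  exact Prod.ext_iff.2 ⟨Subtype.ext ht, ha⟩

theorem phiMap_surjective (E : Skew Λ SP c) [LocallyCompactSpace A] :
    Function.Surjective (PhiMap E) := by
  rintro ⟨T, hTcar, hTb1, hTb2⟩
  obtain ⟨P, Q, hm, Z, hXs, hYs⟩ := hTcar
  set x := projPath E T.1 with hxdef
  set y := projPath E T.2.2 with hydef
  set a := aOf T.1 with hadef
  have hX : T.1 = phiPath E x a := (phiPath_proj E T.1).symm
  have hY : T.2.2 = phiPath E y (aOf T.2.2) := (phiPath_proj E T.2.2).symm
  have hxs' : IsShiftOf P x (projPath E Z) := shift_down E hXs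
  have hys' : IsShiftOf Q y (projPath E Z) := shift_down E hYs
  have htcar : ((x, T.2.1, y) : GTriple Λ) ∈ PathGroupoidCarrier Λ :=
    ⟨P, Q, hm, projPath E Z, hxs', hys'⟩
  have hbx : IsBoundary x := by
    have h := hTb1
    rw [hX] at h
    exact isBoundary_phi_inv E a h
  have hby : IsBoundary y := by
    have h := hTb2
    rw [hY] at h
    exact isBoundary_phi_inv E (aOf T.2.2) h
  have hw : ZGW Λ ((x, T.2.1, y) : GTriple Λ) (x.seg 0 P) (y.seg 0 Q) :=
    ZGW_of_shifts (t := (x, T.2.1, y)) hxs' hys' hm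
  have haZ1 : aOf Z = a * c (x.seg 0 P) := aOf_shift E hXs
  have haZ2 : aOf Z = aOf T.2.2 * c (y.seg 0 Q) := aOf_shift E hYs
  have ha2 : aOf T.2.2 = a * (c (x.seg 0 P) * (c (y.seg 0 Q))⁻¹) := by
    have h := haZ1.symm.trans haZ2
    calc aOf T.2.2 = aOf T.2.2 * c (y.seg 0 Q) * (c (y.seg 0 Q))⁻¹ := by group
      _ = a * c (x.seg 0 P) * (c (y.seg 0 Q))⁻¹ := by rw [← h]
      _ = a * (c (x.seg 0 P) * (c (y.seg 0 Q))⁻¹) := by group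
  refine ⟨(⟨(x, T.2.1, y), htcar, hbx, hby⟩, a), ?_⟩
  apply Subtype.ext
  show phiTriple E (x, T.2.1, y) a = T
  have h3 : phiPath E y (a * cval c Λ ((x, T.2.1, y) : GTriple Λ)) = T.2.2 := by
    rw [cval_eq E hw, ← ha2, ← hY]
  refine Prod.ext_iff.2 ⟨hX.symm, Prod.ext_iff.2 ⟨rfl, h3⟩⟩


/-- Projection of a triple of the skew product. -/
def projTriple (E : Skew Λ SP c) (T : GTriple SP) : GTriple Λ :=
  (projPath E T.1, T.2.1, projPath E T.2.2)

theorem projTriple_carrier (E : Skew Λ SP c) {T : GTriple SP}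
    (hT : T ∈ PathGroupoidCarrier SP) : projTriple E T ∈ PathGroupoidCarrier Λ := by
  obtain ⟨P, Q, hm, Z, hXs, hYs⟩ := hT
  exact ⟨P, Q, hm, projPath E Z, shift_down E hXs, shift_down E hYs⟩

theorem projTriple_phiTriple (E : Skew Λ SP c) (t : GTriple Λ) (a : A) :
    projTriple E (phiTriple E t a) = t :=
  Prod.ext_iff.2 ⟨proj_phiPath E t.1 a, Prod.ext_iff.2 ⟨rfl, proj_phiPath E t.2.2 _⟩⟩

theorem phiTriple_projTriple (E : Skew Λ SP c) {T : GTriple SP}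
    (hT : T ∈ PathGroupoidCarrier SP) :
    phiTriple E (projTriple E T) (aOf T.1) = T := by
  obtain ⟨P, Q, hm, Z, hXs, hYs⟩ := hT
  have hw : ZGW Λ (projTriple E T) ((projPath E T.1).seg 0 P)
      ((projPath E T.2.2).seg 0 Q) :=
    ZGW_of_shifts (t := projTriple E T) (shift_down E hXs) (shift_down E hYs) hm
  have haZ1 : aOf Z = aOf T.1 * c ((T.1.seg 0 P).1) := aOf_shift E hXs
  have haZ2 : aOf Z = aOf T.2.2 * c ((T.2.2.seg 0 Q).1) := aOf_shift E hYs
  have ha2 : aOf T.2.2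
      = aOf T.1 * (c ((T.1.seg 0 P).1) * (c ((T.2.2.seg 0 Q).1))⁻¹) := by
    have h := haZ1.symm.trans haZ2
    calc aOf T.2.2
        = aOf T.2.2 * c ((T.2.2.seg 0 Q).1) * (c ((T.2.2.seg 0 Q).1))⁻¹ := by group
      _ = aOf T.1 * c ((T.1.seg 0 P).1) * (c ((T.2.2.seg 0 Q).1))⁻¹ := by rw [← h]
      _ = _ := by group
  show (phiPath E (projPath E T.1) (aOf T.1), T.2.1,
      phiPath E (projPath E T.2.2) (aOf T.1 * cval c Λ (projTriple E T))) = T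
  refine Prod.ext_iff.2 ⟨phiPath_proj E T.1, Prod.ext_iff.2 ⟨rfl, ?_⟩⟩
  show phiPath E (projPath E T.2.2) (aOf T.1 * cval c Λ (projTriple E T)) = T.2.2
  rw [cval_eq E hw]
  rw [show c ((projPath E T.1).seg 0 P) * (c ((projPath E T.2.2).seg 0 Q))⁻¹
      = c ((T.1.seg 0 P).1) * (c ((T.2.2.seg 0 Q).1))⁻¹ from rfl, ← ha2]
  exact phiPath_proj E T.2.2

theorem mem_ZG_SP_iff (E : Skew Λ SP c) {Ft : Set ((Mor × A) × (Mor × A))}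
    {m : Fin k → ℤ} {T : GTriple SP} (hT : T ∈ PathGroupoidCarrier SP) :
    T ∈ ZG SP Ft m ↔ T.2.1 = m ∧ ∃ L M, ZGW Λ (projTriple E T) L M ∧
      ((L, aOf T.1), (M, aOf T.1 * (c L * (c M)⁻¹))) ∈ Ft := by
  have he := phiTriple_projTriple E hT
  constructor
  · intro h
    rw [← he] at h
    exact (phi_mem_ZG_iff E (aOf T.1)).1 h
  · intro h
    rw [← he]
    exact (phi_mem_ZG_iff E (aOf T.1)).2 h

theorem phiMap_preimage_pos_open (E : Skew Λ SP c) [IsTopologicalGroup A]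
    (hc : Continuous c) {U V : Set (Mor × A)} (hU : IsOpen U) (hV : IsOpen V)
    (m : Fin k → ℤ) :
    IsOpen {p : BdryGpd Λ × A |
      phiTriple E p.1.val p.2 ∈ ZG SP ((U ×ˢ V) ∩ {lm | SP.s lm.1 = SP.s lm.2}) m} := by
  rw [isOpen_iff_forall_mem_open]
  rintro ⟨⟨t, htcar, htb⟩, a⟩ hmem
  rw [Set.mem_setOf_eq] at hmem
  obtain ⟨hm1, L, M, hw, hUV⟩ := (phi_mem_ZG_iff E a).1 hmem
  obtain ⟨⟨hLU, hMV⟩, -⟩ := hUV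
  obtain ⟨U₁, U₂, hU₁, hU₂, hLU₁, haU₂, hU₁₂⟩ := isOpen_prod_iff.1 hU L a hLU
  obtain ⟨V₁, V₂, hV₁, hV₂, hMV₁, hbV₂, hV₁₂⟩ :=
    isOpen_prod_iff.1 hV M (a * (c L * (c M)⁻¹)) hMV
  have hcontf : Continuous (fun q : A × A × A => q.1 * (q.2.1 * q.2.2⁻¹)) := by
    exact continuous_fst.mul ((continuous_fst.comp continuous_snd).mul
      (continuous_snd.comp continuous_snd).inv)
  have hfmem : (fun q : A × A × A => q.1 * (q.2.1 * q.2.2⁻¹)) (a, c L, c M) ∈ V₂ := hbV₂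
  obtain ⟨W, GH, hWo, hGHo, haW, hGHmem, hWGH⟩ :=
    isOpen_prod_iff.1 (hV₂.preimage hcontf) a (c L, c M) hfmem
  obtain ⟨G, H, hGo, hHo, hcLG, hcMH, hGH'⟩ := isOpen_prod_iff.1 hGHo (c L) (c M) hGHmem
  refine ⟨{p : BdryGpd Λ | Subtype.val p ∈ ZG Λ
      ((((U₁ ∩ c ⁻¹' G) ×ˢ (V₁ ∩ c ⁻¹' H)) ∩ {lm | Λ.s lm.1 = Λ.s lm.2})) m}
        ×ˢ (U₂ ∩ W), ?_,
    (isOpen_preimage_ZG_basic (hU₁.inter (hGo.preimage hc))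
      (hV₁.inter (hHo.preimage hc)) m).prod (hU₂.inter hWo), ?_, ⟨haU₂, haW⟩⟩
  · rintro ⟨⟨t', h'car, h'b⟩, a'⟩ ⟨ht', ha'⟩
    obtain ⟨hm', L', M', ⟨⟨⟨hL'U₁, hcL'G⟩, hM'V₁, hcM'H⟩, -⟩, hw'⟩ := mem_ZG_iff.1 ht'
    rw [Set.mem_setOf_eq]
    have hG' : c L' ∈ G := hcL'G
    have hH' : c M' ∈ H := hcM'H
    refine (phi_mem_ZG_iff E a').2 ⟨hm', L', M', hw', ⟨⟨hU₁₂ ⟨hL'U₁, ha'.1⟩,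
      hV₁₂ ⟨hM'V₁, hWGH (Set.mk_mem_prod ha'.2 (hGH' (Set.mk_mem_prod hG' hH')))⟩⟩, ?_⟩⟩
    rw [E.hs]
    exact congrArg₂ Prod.mk hw'.1 (by group)
  · exact mem_ZG_iff.2 ⟨hm1, L, M, ⟨⟨⟨hLU₁, hcLG⟩, ⟨hMV₁, hcMH⟩⟩, hw.1⟩, hw⟩


theorem phiMap_preimage_neg_open (E : Skew Λ SP c) [IsTopologicalGroup A]
    [LocallyCompactSpace A] [SecondCountableTopology A] (hc : Continuous c)
    {F : Set ((Mor × A) × (Mor × A))} (hF : IsCompact F) (m : Fin k → ℤ) :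
    IsOpen {p : BdryGpd Λ × A | phiTriple E p.1.val p.2 ∈ (ZG SP F m)ᶜ} := by
  haveI := SP.t2Mor
  haveI := SP.secondCountableMor
  haveI := Λ.t2Mor
  rw [isOpen_iff_forall_mem_open]
  rintro ⟨⟨t, htcar, htb⟩, a⟩ hmem
  rw [Set.mem_setOf_eq, Set.mem_compl_iff] at hmem
  by_cases hm : t.2.1 = m
  swap
  · refine ⟨{p : BdryGpd Λ | Subtype.val p ∈ ZG Λ
      ((Set.univ ×ˢ Set.univ) ∩ {lm | Λ.s lm.1 = Λ.s lm.2}) t.2.1} ×ˢ Set.univ, ?_,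
      (isOpen_preimage_ZG_basic isOpen_univ isOpen_univ t.2.1).prod isOpen_univ,
      mem_ZG_univ htcar, trivial⟩
    rintro ⟨⟨t', h'⟩, a'⟩ ⟨ht', -⟩
    rw [Set.mem_setOf_eq, Set.mem_compl_iff]
    intro hbad
    have h1 : t'.2.1 = m := (mem_ZG_iff.1 hbad).1
    have h2 : t'.2.1 = t.2.1 := (mem_ZG_iff.1 ht').1
    exact hm (h2.symm.trans h1)
  · obtain ⟨B, hB⟩ := (nhds a).exists_antitone_basis
    have hKex : ∀ n : ℕ, ∃ K, K ∈ nhds a ∧ K ⊆ B n ∧ IsCompact K := fun n =>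
      local_compact_nhds (hB.mem n)
    choose K0 hK0n hK0s hK0c using hKex
    set K : ℕ → Set A := fun n => ⋂ i : Fin (n + 1), K0 i with hKdef
    have hKn : ∀ n, K n ∈ nhds a := fun n =>
      Filter.iInter_mem.2 fun i => hK0n i
    have hK0sub : ∀ n i, i ≤ n → K n ⊆ K0 i := fun n i hi =>
      Set.iInter_subset (fun j : Fin (n + 1) => K0 j) ⟨i, by omega⟩
    have hKc : ∀ n, IsCompact (K n) := fun n =>
      (hK0c 0).of_isClosed_subset (isClosed_iInter fun i => (hK0c i).isClosed)
        (hK0sub n 0 (by omega))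
    have hKB : ∀ n, K n ⊆ B n := fun n => (hK0sub n n le_rfl).trans (hK0s n)
    set FK : ℕ → Set (Mor × Mor) := fun n => {LM : Mor × Mor | ∃ g ∈ K n,
        ((LM.1, g), (LM.2, g * (c LM.1 * (c LM.2)⁻¹))) ∈ F} with hFKdef
    have hFKc : ∀ n, IsCompact (FK n) := by
      intro n
      have hC : IsClosed {q : (Mor × A) × (Mor × A) | q.1.2 ∈ K n ∧
          q.2.2 = q.1.2 * (c q.1.1 * (c q.2.1)⁻¹)} := by
        apply IsClosed.inter
        · exact (hKc n).isClosed.preimage (continuous_snd.comp continuous_fst)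
        · exact isClosed_eq (continuous_snd.comp continuous_snd)
            (((continuous_snd.comp continuous_fst)).mul
              (((hc.comp (continuous_fst.comp continuous_fst))).mul
                ((hc.comp (continuous_fst.comp continuous_snd)).inv)))
      have himg : FK n = (fun q : (Mor × A) × (Mor × A) => (q.1.1, q.2.1)) ''
          (F ∩ {q | q.1.2 ∈ K n ∧ q.2.2 = q.1.2 * (c q.1.1 * (c q.2.1)⁻¹)}) := by
        ext LM
        constructor
        · rintro ⟨g, hg, hq⟩
          exact ⟨((LM.1, g), (LM.2, g * (c LM.1 * (c LM.2)⁻¹))), ⟨hq, hg, rfl⟩, rfl⟩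
        · rintro ⟨q, ⟨hqF, hq2, hqeq⟩, rfl⟩
          refine ⟨q.1.2, hq2, ?_⟩
          show ((q.1.1, q.1.2), (q.2.1, q.1.2 * (c q.1.1 * (c q.2.1)⁻¹))) ∈ F
          rw [← hqeq]
          exact hqF
      rw [himg]
      exact (hF.inter_right hC).image
        ((continuous_fst.comp continuous_fst).prodMk (continuous_fst.comp continuous_snd))
    have hclaim : ∃ n, (t : GTriple Λ) ∉ ZG Λ (FK n) m := by
      by_contra hcon
      push_neg at hcon
      have hwit : ∀ n, ∃ fn : (Mor × A) × (Mor × A), fn ∈ F ∧ fn.1.2 ∈ K n ∧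
          ZGW Λ t fn.1.1 fn.2.1 ∧
          fn.2.2 = fn.1.2 * (c fn.1.1 * (c fn.2.1)⁻¹) := by
        intro n
        obtain ⟨h1, L, M, hLM, hw⟩ := mem_ZG_iff.1 (hcon n)
        obtain ⟨g, hg, hq⟩ := hLM
        exact ⟨((L, g), (M, g * (c L * (c M)⁻¹))), hq, hg, hw, rfl⟩
      choose f hfF hfK hfZ hfE using hwit
      obtain ⟨fl, hflF, φ, hφmono, hφt⟩ := hF.isSeqCompact hfF
      have htL : Filter.Tendsto (fun j => (f (φ j)).1.1) Filter.atTop (nhds fl.1.1) :=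
        ((continuous_fst.comp continuous_fst).tendsto fl).comp hφt
      have htM : Filter.Tendsto (fun j => (f (φ j)).2.1) Filter.atTop (nhds fl.2.1) :=
        ((continuous_fst.comp continuous_snd).tendsto fl).comp hφt
      have htg : Filter.Tendsto (fun j => (f (φ j)).1.2) Filter.atTop (nhds fl.1.2) :=
        ((continuous_snd.comp continuous_fst).tendsto fl).comp hφt
      have htb2 : Filter.Tendsto (fun j => (f (φ j)).2.2) Filter.atTop (nhds fl.2.2) :=
        ((continuous_snd.comp continuous_snd).tendsto fl).comp hφt
      have hdL : ∀ᶠ j in Filter.atTop, Λ.d ((f (φ j)).1.1) = Λ.d fl.1.1 := by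
        have h := (Λ.continuous_d.tendsto fl.1.1).comp htL
        rw [nhds_discrete] at h
        exact Filter.tendsto_pure.1 h
      have hdM : ∀ᶠ j in Filter.atTop, Λ.d ((f (φ j)).2.1) = Λ.d fl.2.1 := by
        have h := (Λ.continuous_d.tendsto fl.2.1).comp htM
        rw [nhds_discrete] at h
        exact Filter.tendsto_pure.1 h
      have hLconst : ∀ᶠ j in Filter.atTop,
          (f (φ j)).1.1 = t.1.seg 0 (Λ.d fl.1.1) := hdL.mono fun j hj => by
        rw [← hj]
        exact (ZGW_initseg (hfZ (φ j))).1.symm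
      have hMconst : ∀ᶠ j in Filter.atTop,
          (f (φ j)).2.1 = t.2.2.seg 0 (Λ.d fl.2.1) := hdM.mono fun j hj => by
        rw [← hj]
        exact (ZGW_initseg (hfZ (φ j))).2.symm
      have hLlim : fl.1.1 = t.1.seg 0 (Λ.d fl.1.1) :=
        tendsto_nhds_unique htL
          (tendsto_const_nhds.congr' (hLconst.mono fun j hj => hj.symm))
      have hMlim : fl.2.1 = t.2.2.seg 0 (Λ.d fl.2.1) :=
        tendsto_nhds_unique htM
          (tendsto_const_nhds.congr' (hMconst.mono fun j hj => hj.symm))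
      have hga : fl.1.2 = a := by
        have h1 : Filter.Tendsto (fun n => (f n).1.2) Filter.atTop (nhds a) :=
          hB.tendsto fun n => hKB n (hfK n)
        exact tendsto_nhds_unique htg (h1.comp hφmono.tendsto_atTop)
      have hbb : fl.2.2 = fl.1.2 * (c fl.1.1 * (c fl.2.1)⁻¹) := by
        have h2 : Filter.Tendsto
            (fun j => (f (φ j)).1.2 * (c ((f (φ j)).1.1) * (c ((f (φ j)).2.1))⁻¹))
            Filter.atTop (nhds (fl.1.2 * (c fl.1.1 * (c fl.2.1)⁻¹))) :=
          htg.mul (((hc.tendsto _).comp htL).mul ((hc.tendsto _).comp htM).inv)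
        exact tendsto_nhds_unique htb2 (h2.congr fun j => (hfE (φ j)).symm)
      obtain ⟨j, hjL, hjM⟩ := (hLconst.and hMconst).exists
      have hwstar : ZGW Λ t fl.1.1 fl.2.1 := by
        have h := hfZ (φ j)
        rw [hjL, hjM, ← hLlim, ← hMlim] at h
        exact h
      have hFmem : ((fl.1.1, a), (fl.2.1, a * (c fl.1.1 * (c fl.2.1)⁻¹))) ∈ F := by
        have hfl : fl = ((fl.1.1, a), (fl.2.1, a * (c fl.1.1 * (c fl.2.1)⁻¹))) := by
          rw [← hga, ← hbb]
        rw [← hfl]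
        exact hflF
      exact hmem ((phi_mem_ZG_iff E a).2 ⟨hm, fl.1.1, fl.2.1, hwstar, hFmem⟩)
    obtain ⟨n, hn⟩ := hclaim
    refine ⟨{p : BdryGpd Λ | Subtype.val p ∈ (ZG Λ (FK n) m)ᶜ} ×ˢ interior (K n), ?_,
      (isOpen_preimage_compl_ZG (hFKc n)).prod isOpen_interior,
      hn, mem_interior_iff_mem_nhds.2 (hKn n)⟩
    rintro ⟨⟨t', h'car, h'b⟩, a'⟩ ⟨ht', ha'⟩
    rw [Set.mem_setOf_eq, Set.mem_compl_iff]
    intro hbad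
    obtain ⟨h1, L, M, hw, hpair⟩ := (phi_mem_ZG_iff E a').1 hbad
    exact ht' (mem_ZG_iff.2 ⟨h1, L, M, ⟨a', interior_subset ha', hpair⟩, hw⟩)


theorem phiMap_continuous (E : Skew Λ SP c) [IsTopologicalGroup A]
    [LocallyCompactSpace A] [SecondCountableTopology A] (hc : Continuous c) :
    Continuous (PhiMap E) := by
  letI : TopologicalSpace (GTriple SP) := groupoidTopology SP
  apply continuous_induced_rng.2
  apply continuous_generateFrom_iff.2
  rintro S ⟨m, U, V, F, hU, hV, hF, rfl⟩
  rw [Set.preimage_inter]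
  exact (phiMap_preimage_pos_open E hc hU hV m).inter
    (phiMap_preimage_neg_open E hc hF m)

theorem phiMap_image_univ_open (E : Skew Λ SP c) [LocallyCompactSpace A]
    {W : Set A} (hW : IsOpen W) :
    IsOpen (PhiMap E '' (Set.univ ×ˢ W)) := by
  have hchar : PhiMap E '' (Set.univ ×ˢ W) = {T : BdryGpd SP | aOf T.val.1 ∈ W} := by
    ext T
    constructor
    · rintro ⟨⟨tq, a⟩, ⟨-, haW⟩, rfl⟩
      show aOf (phiPath E tq.val.1 a) ∈ W
      rw [aOf_phiPath]
      exact haW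
    · intro hT
      obtain ⟨p, rfl⟩ := phiMap_surjective E T
      refine ⟨p, ⟨trivial, ?_⟩, rfl⟩
      have h2 : aOf ((PhiMap E p).val.1) = p.2 := aOf_phiPath E p.1.val.1 p.2
      have hT' : aOf ((PhiMap E p).val.1) ∈ W := hT
      rwa [h2] at hT' 
  rw [hchar, isOpen_iff_forall_mem_open]
  intro T hT
  obtain ⟨K, hKn, hKW, hKc⟩ := local_compact_nhds (hW.mem_nhds hT)
  refine ⟨{T' : BdryGpd SP | Subtype.val T' ∈ ZG SP
      (((Set.univ ×ˢ interior K) ×ˢ (Set.univ ×ˢ Set.univ))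
        ∩ {lm | SP.s lm.1 = SP.s lm.2}) T.val.2.1}, ?_,
    isOpen_preimage_ZG_basic (isOpen_univ.prod isOpen_interior)
      (isOpen_univ.prod isOpen_univ) _, ?_⟩
  · rintro T' hT'
    obtain ⟨-, Lt, Mt, ⟨⟨⟨-, hLint⟩, -⟩, -⟩, hw'⟩ := mem_ZG_iff.1 hT'
    obtain ⟨-, -, X', hcc⟩ := hw'
    have hLa : Lt.2 = aOf T'.val.1 := (concat_down E hcc.1).1
    show aOf T'.val.1 ∈ W
    rw [← hLa]
    exact hKW (interior_subset hLint)
  · obtain ⟨Lt, Mt, hw⟩ := exists_ZGW T.prop.1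
    obtain ⟨-, X', hcc⟩ := hw.2
    have hLa : Lt.2 = aOf T.val.1 := (concat_down E hcc.1).1
    have hint : Lt.2 ∈ interior K := by
      rw [hLa]
      exact mem_interior_iff_mem_nhds.2 hKn
    exact mem_ZG_iff.2 ⟨rfl, Lt, Mt, ⟨⟨⟨trivial, hint⟩, trivial, trivial⟩, hw.1⟩, hw⟩

theorem phiMap_image_basic_open (E : Skew Λ SP c) [IsTopologicalGroup A]
    [LocallyCompactSpace A] (hc : Continuous c)
    {U V : Set Mor} (hU : IsOpen U) (hV : IsOpen V) {F : Set (Mor × Mor)}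
    (hF : IsCompact F) (m : Fin k → ℤ) {W : Set A} (hW : IsOpen W) :
    IsOpen (PhiMap E '' (({p : BdryGpd Λ | Subtype.val p ∈
      ZG Λ ((U ×ˢ V) ∩ {lm | Λ.s lm.1 = Λ.s lm.2}) m ∩ (ZG Λ F m)ᶜ}) ×ˢ W)) := by
  haveI := SP.t2Mor
  have hchar : PhiMap E '' (({p : BdryGpd Λ | Subtype.val p ∈
        ZG Λ ((U ×ˢ V) ∩ {lm | Λ.s lm.1 = Λ.s lm.2}) m ∩ (ZG Λ F m)ᶜ}) ×ˢ W)
      = {T : BdryGpd SP |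
        (projTriple E T.val ∈ ZG Λ ((U ×ˢ V) ∩ {lm | Λ.s lm.1 = Λ.s lm.2}) m ∧
          projTriple E T.val ∉ ZG Λ F m) ∧ aOf T.val.1 ∈ W} := by
    ext T
    constructor
    · rintro ⟨⟨tq, a⟩, ⟨htS, haW⟩, rfl⟩
      have h1 : projTriple E ((PhiMap E (tq, a)).val) = tq.val :=
        projTriple_phiTriple E tq.val a
      have h2 : aOf ((PhiMap E (tq, a)).val.1) = a := aOf_phiPath E tq.val.1 a
      refine ⟨?_, ?_⟩
      · rw [Set.mem_setOf_eq] at htS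
        rw [h1]
        exact ⟨htS.1, htS.2⟩
      · rw [h2]
        exact haW
    · rintro ⟨⟨hpos, hneg⟩, haW⟩
      obtain ⟨p, hp⟩ := phiMap_surjective E T
      have hval : phiTriple E p.1.val p.2 = T.val := congrArg Subtype.val hp
      have h1 : projTriple E T.val = p.1.val := by
        rw [← hval]
        exact projTriple_phiTriple E p.1.val p.2
      have h2 : aOf T.val.1 = p.2 := by
        rw [← hval]
        exact aOf_phiPath E p.1.val.1 p.2
      refine ⟨p, ⟨?_, ?_⟩, hp⟩
      · rw [Set.mem_setOf_eq, ← h1]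
        exact ⟨hpos, hneg⟩
      · rw [← h2]
        exact haW
  rw [hchar, isOpen_iff_forall_mem_open]
  rintro T ⟨⟨hpos, hneg⟩, haW⟩
  obtain ⟨K, hKn, hKW, hKc⟩ := local_compact_nhds (hW.mem_nhds haW)
  have hFKc : IsCompact ((fun q : (Mor × Mor) × A =>
      ((q.1.1, q.2), (q.1.2, q.2 * (c q.1.1 * (c q.1.2)⁻¹)))) '' (F ×ˢ K)) :=
    (hF.prod hKc).image
      (((continuous_fst.comp continuous_fst).prodMk continuous_snd).prodMk
        ((continuous_snd.comp continuous_fst).prodMk (continuous_snd.mul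
          ((hc.comp (continuous_fst.comp continuous_fst)).mul
            ((hc.comp (continuous_snd.comp continuous_fst)).inv)))))
  refine ⟨{T' : BdryGpd SP | Subtype.val T' ∈
      ZG SP (((U ×ˢ interior K) ×ˢ (V ×ˢ Set.univ))
        ∩ {lm | SP.s lm.1 = SP.s lm.2}) m}
    ∩ {T' : BdryGpd SP | Subtype.val T' ∈ (ZG SP ((fun q : (Mor × Mor) × A =>
      ((q.1.1, q.2), (q.1.2, q.2 * (c q.1.1 * (c q.1.2)⁻¹)))) '' (F ×ˢ K)) m)ᶜ}, ?_,
    (isOpen_preimage_ZG_basic (hU.prod isOpen_interior) (hV.prod isOpen_univ) m).inter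
      (isOpen_preimage_compl_ZG hFKc), ?_, ?_⟩
  · rintro T' ⟨hT1, hT2⟩
    obtain ⟨h1, L, M, hw, hpair⟩ := (mem_ZG_SP_iff E T'.prop.1).1 hT1
    obtain ⟨⟨⟨hLU, hLint⟩, hMV, -⟩, -⟩ := hpair
    refine ⟨⟨?_, ?_⟩, ?_⟩
    · exact mem_ZG_iff.2 ⟨h1, L, M, ⟨⟨hLU, hMV⟩, hw.1⟩, hw⟩
    · intro hbad
      obtain ⟨h1', L', M', hF', hw'⟩ := mem_ZG_iff.1 hbad
      exact hT2 ((mem_ZG_SP_iff E T'.prop.1).2 ⟨h1', L', M', hw',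
        ⟨((L', M'), aOf T'.val.1), ⟨hF', interior_subset hLint⟩, rfl⟩⟩)
    · exact hKW (interior_subset hLint)
  · obtain ⟨h1, L, M, ⟨⟨hLU, hMV⟩, -⟩, hw⟩ := mem_ZG_iff.1 hpos
    refine (mem_ZG_SP_iff E T.prop.1).2 ⟨h1, L, M, hw,
      ⟨⟨⟨hLU, mem_interior_iff_mem_nhds.2 hKn⟩, hMV, trivial⟩, ?_⟩⟩
    rw [E.hs]
    exact congrArg₂ Prod.mk hw.1 (by group)
  · intro hbad
    obtain ⟨h1', L', M', hw', hpair'⟩ := (mem_ZG_SP_iff E T.prop.1).1 hbad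
    obtain ⟨q, ⟨hqF, hqK⟩, hqeq⟩ := hpair'
    have hL' : q.1.1 = L' := congrArg (fun z => z.1.1) hqeq
    have hM' : q.1.2 = M' := congrArg (fun z => z.2.1) hqeq
    have hq1 : q.1 = (L', M') := Prod.ext_iff.2 ⟨hL', hM'⟩
    rw [hq1] at hqF
    exact hneg (mem_ZG_iff.2 ⟨h1', L', M', hqF, hw'⟩)

theorem phiMap_image_open (E : Skew Λ SP c) [IsTopologicalGroup A]
    [LocallyCompactSpace A] (hc : Continuous c)
    {O1 : Set (GTriple Λ)} (hO1 : TopologicalSpace.GenerateOpen (ZGens Λ) O1)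
    {W : Set A} (hW : IsOpen W) :
    IsOpen (PhiMap E '' ({p : BdryGpd Λ | Subtype.val p ∈ O1} ×ˢ W)) := by
  induction hO1 with
  | basic S hS =>
    obtain ⟨m, U, V, F, hU, hV, hF, rfl⟩ := hS
    exact phiMap_image_basic_open E hc hU hV hF m hW
  | univ =>
    have h : {p : BdryGpd Λ | Subtype.val p ∈ (Set.univ : Set (GTriple Λ))}
        = Set.univ := by
      ext p; simp
    rw [h]
    exact phiMap_image_univ_open E hW
  | inter S1 S2 h1 h2 ih1 ih2 =>
    have heq : ({p : BdryGpd Λ | Subtype.val p ∈ S1 ∩ S2} ×ˢ W)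
        = (({p : BdryGpd Λ | Subtype.val p ∈ S1} ×ˢ W)
          ∩ ({p : BdryGpd Λ | Subtype.val p ∈ S2} ×ˢ W)) := by
      ext ⟨p, a⟩
      constructor
      · rintro ⟨⟨hp1, hp2⟩, ha⟩
        exact ⟨⟨hp1, ha⟩, hp2, ha⟩
      · rintro ⟨⟨hp1, ha⟩, hp2, -⟩
        exact ⟨⟨hp1, hp2⟩, ha⟩
    rw [heq, Set.image_inter (phiMap_injective E)]
    exact ih1.inter ih2
  | sUnion S hS ih =>
    have heq : PhiMap E '' ({p : BdryGpd Λ | Subtype.val p ∈ ⋃₀ S} ×ˢ W)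
        = ⋃ s : S, PhiMap E '' ({p : BdryGpd Λ | Subtype.val p ∈ s.val} ×ˢ W) := by
      ext T
      constructor
      · rintro ⟨p, ⟨⟨s, hsS, hps⟩, hpW⟩, rfl⟩
        exact Set.mem_iUnion.2 ⟨⟨s, hsS⟩, p, ⟨hps, hpW⟩, rfl⟩
      · intro h
        obtain ⟨⟨s, hsS⟩, p, ⟨hps, hpW⟩, rfl⟩ := Set.mem_iUnion.1 h
        exact ⟨p, ⟨⟨s, hsS, hps⟩, hpW⟩, rfl⟩
    rw [heq]
    exact isOpen_iUnion fun s => ih s.val s.prop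

theorem phiMap_isOpenMap (E : Skew Λ SP c) [IsTopologicalGroup A]
    [LocallyCompactSpace A] (hc : Continuous c) : IsOpenMap (PhiMap E) := by
  intro O hO
  rw [isOpen_iff_forall_mem_open]
  rintro T ⟨pt, hptO, rfl⟩
  obtain ⟨N1, N2, hN1, hN2, hpt1, hpt2, hsub⟩ := isOpen_prod_iff.1 hO pt.1 pt.2 hptO
  letI : TopologicalSpace (GTriple Λ) := groupoidTopology Λ
  obtain ⟨O1, hO1gen, hO1eq⟩ := isOpen_induced_iff.1 hN1
  refine ⟨PhiMap E '' (N1 ×ˢ N2), Set.image_mono fun q hq => hsub hq, ?_,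
    ⟨pt, ⟨hpt1, hpt2⟩, rfl⟩⟩
  rw [← hO1eq]
  exact phiMap_image_open E hc hO1gen hN2

end Skew

end Aux



end TKG

open TKG in
/-- The image of `(∂Λ) × A` under the map `φ` on unit spaces equals the boundary-path
space `∂(Λ ×_c A)`; consequently the skew-product boundary groupoid `𝒢_Λ(c̃)` is
isomorphic to `𝒢_{Λ ×_c A}`. -/
theorem skew_product_boundary_iso
    {k : ℕ} {Obj Mor : Type} [TopologicalSpace Obj] [TopologicalSpace Mor]
    (Λ : TopKGraph k Obj Mor) (hΛ : CompactlyAligned Λ)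
    (A : Type) [TopologicalSpace A] [Group A] [IsTopologicalGroup A]
    [LocallyCompactSpace A] [T2Space A] [SecondCountableTopology A]
    (c : Mor → A) (hc : Continuous c)
    (hmul : ∀ (f g : Mor) (h : Λ.s f = Λ.r g), c (Λ.comp f g h) = c f * c g)
    (hone : ∀ v : Obj, c (Λ.ident v) = 1)
    -- `SP` is the skew-product `k`-graph `Λ ×_c A`:
    (SP : TopKGraph k (Obj × A) (Mor × A))
    (hr : SP.r = fun p => (Λ.r p.1, p.2))
    (hs : SP.s = fun p => (Λ.s p.1, p.2 * c p.1))
    (hd : SP.d = fun p => Λ.d p.1)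
    (hcomp : ∀ (f g : Mor × A) (h : SP.s f = SP.r g) (h' : Λ.s f.1 = Λ.r g.1),
      SP.comp f g h = (Λ.comp f.1 g.1 h', f.2)) :
    -- the image of `(∂Λ) × A` under `φ` is exactly `∂(Λ ×_c A)` …
    ({X : KPath SP | IsBoundary X} =
      {X : KPath SP | ∃ (x : KPath Λ) (a : A), IsBoundary x ∧ IsPhiOf Λ SP c x a X}) ∧
    -- … and consequently `𝒢_Λ(c̃) ≅ 𝒢_{Λ ×_c A}` via the restriction of the
    -- skew-product isomorphism
    (∃ Φ : BdryGpd Λ × A → BdryGpd SP,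
      Function.Bijective Φ ∧ Continuous Φ ∧ IsOpenMap Φ ∧
      (∀ (t : BdryGpd Λ) (a : A) (l mu : Mor) (x : KPath Λ),
        IsConcatOf l x t.val.1 → IsConcatOf mu x t.val.2.2 →
        t.val.2.1 = (fun i => (Λ.d l i : ℤ) - (Λ.d mu i : ℤ)) →
        (Φ (t, a)).val.2.1 = t.val.2.1 ∧
        IsPhiOf Λ SP c t.val.1 a (Φ (t, a)).val.1 ∧
        IsPhiOf Λ SP c t.val.2.2 (a * (c l * (c mu)⁻¹)) (Φ (t, a)).val.2.2)) := by
  have E : Skew Λ SP c := ⟨hr, hs, hd, hcomp, hmul, hone⟩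
  constructor
  · ext X
    simp only [Set.mem_setOf_eq]
    constructor
    · intro hX
      refine ⟨projPath E X, aOf X, ?_, isPhiOf_proj E X⟩
      have hXeq : X = phiPath E (projPath E X) (aOf X) := (phiPath_proj E X).symm
      rw [hXeq] at hX
      exact isBoundary_phi_inv E _ hX
    · rintro ⟨x, a, hx, hphi⟩
      rw [isPhiOf_unique E hphi]
      exact isBoundary_phi_of E a hx
  · refine ⟨PhiMap E, ⟨phiMap_injective E, phiMap_surjective E⟩, ?_, ?_, ?_⟩
    · exact phiMap_continuous E hc
    · exact phiMap_isOpenMap E hc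
    · intro t a l mu xx hc1 hc2 hdeg
      have hw : ZGW Λ t.val l mu := ⟨hc1.1.trans hc2.1.symm, hdeg.symm, xx, hc1, hc2⟩
      refine ⟨rfl, ?_, ?_⟩
      · show IsPhiOf Λ SP c t.val.1 a (phiPath E t.val.1 a)
        exact phiPath_isPhiOf E t.val.1 a
      · show IsPhiOf Λ SP c t.val.2.2 (a * (c l * (c mu)⁻¹))
          (phiPath E t.val.2.2 (a * cval c Λ t.val))
        rw [cval_eq E hw]
        exact phiPath_isPhiOf E t.val.2.2 _
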